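/- arXiv:1005.0422 — 7 statements merged into one kernel-verified Lean document; each statement's English description precedes it below -/
import Mathlib

section
/- Let $A$ be an algebraic ring over an algebraically closed field $K$, i.e., an affine algebraic variety over $K$ equipped with regular maps $\alpha, \mu : A \times A \to A$ making $A$ into a unital (not necessarily commutative) ring whose additive group $(A,\alpha)$ is a commutative algebraic group. Then the group of units $A^{\times}$ is a principal open subset of $A$: there exists a regular function $\chi \in K[A]$ such that $A^{\times} = \{a \in A \mid \chi(a) \neq 0\}$. -/
noncomputable section

open MvPolynomial

/-- The Zariski topology on affine `n`-space over `K`. -/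
def affineZariski (K : Type) [Field K] (n : ℕ) : TopologicalSpace (Fin n → K) :=
  TopologicalSpace.generateFrom
    {U | ∃ p : MvPolynomial (Fin n) K, U = {x | MvPolynomial.eval x p ≠ 0}}

/-- An algebraic ring over `K`: a Zariski-closed subset of some affine space `K^n`
equipped with regular (polynomial) addition, negation and multiplication maps making it
into a unital ring whose additive group is a commutative algebraic group. -/
structure AlgebraicRing (K : Type) [Field K] where
  n : ℕ
  carrier : Set (Fin n → K)
  carrier_closed : ∃ S : Set (MvPolynomial (Fin n) K),
    carrier = {x | ∀ p ∈ S, MvPolynomial.eval x p = 0}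
  add : (Fin n → K) → (Fin n → K) → Fin n → K
  mul : (Fin n → K) → (Fin n → K) → Fin n → K
  neg : (Fin n → K) → Fin n → K
  zero : Fin n → K
  one : Fin n → K
  add_poly : ∃ P : Fin n → MvPolynomial (Fin n ⊕ Fin n) K,
    ∀ x y : Fin n → K, ∀ i, add x y i = MvPolynomial.eval (Sum.elim x y) (P i)
  mul_poly : ∃ P : Fin n → MvPolynomial (Fin n ⊕ Fin n) K,
    ∀ x y : Fin n → K, ∀ i, mul x y i = MvPolynomial.eval (Sum.elim x y) (P i)
  neg_poly : ∃ P : Fin n → MvPolynomial (Fin n) K,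
    ∀ x : Fin n → K, ∀ i, neg x i = MvPolynomial.eval x (P i)
  zero_mem : zero ∈ carrier
  one_mem : one ∈ carrier
  add_mem : ∀ {x y}, x ∈ carrier → y ∈ carrier → add x y ∈ carrier
  mul_mem : ∀ {x y}, x ∈ carrier → y ∈ carrier → mul x y ∈ carrier
  neg_mem : ∀ {x}, x ∈ carrier → neg x ∈ carrier
  add_comm' : ∀ x ∈ carrier, ∀ y ∈ carrier, add x y = add y x
  add_assoc' : ∀ x ∈ carrier, ∀ y ∈ carrier, ∀ z ∈ carrier,
    add (add x y) z = add x (add y z)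
  zero_add' : ∀ x ∈ carrier, add zero x = x
  neg_add_cancel' : ∀ x ∈ carrier, add (neg x) x = zero
  mul_assoc' : ∀ x ∈ carrier, ∀ y ∈ carrier, ∀ z ∈ carrier,
    mul (mul x y) z = mul x (mul y z)
  one_mul' : ∀ x ∈ carrier, mul one x = x
  mul_one' : ∀ x ∈ carrier, mul x one = x
  left_distrib' : ∀ x ∈ carrier, ∀ y ∈ carrier, ∀ z ∈ carrier,
    mul x (add y z) = add (mul x y) (mul x z)
  right_distrib' : ∀ x ∈ carrier, ∀ y ∈ carrier, ∀ z ∈ carrier,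
    mul (add x y) z = add (mul x z) (mul y z)

namespace AlgebraicRing

variable {K : Type} [Field K] (A : AlgebraicRing K)

/-- The points of the algebraic ring `A`. -/
def Elt : Type := {x : Fin A.n → K // x ∈ A.carrier}

instance : TopologicalSpace A.Elt :=
  TopologicalSpace.induced (fun x => x.1) (affineZariski K A.n)

instance : Add A.Elt := ⟨fun x y => ⟨A.add x.1 y.1, A.add_mem x.2 y.2⟩⟩
instance : Mul A.Elt := ⟨fun x y => ⟨A.mul x.1 y.1, A.mul_mem x.2 y.2⟩⟩
instance : Neg A.Elt := ⟨fun x => ⟨A.neg x.1, A.neg_mem x.2⟩⟩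
instance : Zero A.Elt := ⟨⟨A.zero, A.zero_mem⟩⟩
instance : One A.Elt := ⟨⟨A.one, A.one_mem⟩⟩

instance : AddCommGroup A.Elt where
  add_assoc a b c := Subtype.ext (A.add_assoc' _ a.2 _ b.2 _ c.2)
  zero_add a := Subtype.ext (A.zero_add' _ a.2)
  add_zero a := Subtype.ext (by
    show A.add a.1 A.zero = a.1
    rw [A.add_comm' _ a.2 _ A.zero_mem]
    exact A.zero_add' _ a.2)
  neg_add_cancel a := Subtype.ext (A.neg_add_cancel' _ a.2)
  add_comm a b := Subtype.ext (A.add_comm' _ a.2 _ b.2)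
  nsmul := nsmulRec
  zsmul := zsmulRec

instance : Ring A.Elt :=
  { (inferInstance : AddCommGroup A.Elt) with
    left_distrib := fun a b c => Subtype.ext (A.left_distrib' _ a.2 _ b.2 _ c.2)
    right_distrib := fun a b c => Subtype.ext (A.right_distrib' _ a.2 _ b.2 _ c.2)
    zero_mul := fun a => by
      have h : (0 : A.Elt) * a + (0 : A.Elt) * a = (0 : A.Elt) * a + 0 := by
        rw [add_zero]
        apply Subtype.ext
        show A.add (A.mul A.zero a.1) (A.mul A.zero a.1) = A.mul A.zero a.1
        rw [← A.right_distrib' _ A.zero_mem _ A.zero_mem _ a.2, A.zero_add' _ A.zero_mem]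
      exact add_left_cancel h
    mul_zero := fun a => by
      have h : a * (0 : A.Elt) + a * (0 : A.Elt) = a * (0 : A.Elt) + 0 := by
        rw [add_zero]
        apply Subtype.ext
        show A.add (A.mul a.1 A.zero) (A.mul a.1 A.zero) = A.mul a.1 A.zero
        rw [← A.left_distrib' _ a.2 _ A.zero_mem _ A.zero_mem, A.zero_add' _ A.zero_mem]
      exact add_left_cancel h
    mul_assoc := fun a b c => Subtype.ext (A.mul_assoc' _ a.2 _ b.2 _ c.2)
    one_mul := fun a => Subtype.ext (A.one_mul' _ a.2)
    mul_one := fun a => Subtype.ext (A.mul_one' _ a.2) }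

end AlgebraicRing

/-- A commutative algebraic ring. -/
structure CommAlgebraicRing (K : Type) [Field K] extends AlgebraicRing K where
  mul_comm' : ∀ x ∈ carrier, ∀ y ∈ carrier, mul x y = mul y x

namespace CommAlgebraicRing

variable {K : Type} [Field K] (A : CommAlgebraicRing K)

/-- The points of the commutative algebraic ring `A`. -/
abbrev Elt : Type := A.toAlgebraicRing.Elt

instance : CommRing A.Elt :=
  { (inferInstance : Ring A.toAlgebraicRing.Elt) with
    mul_comm := fun a b => Subtype.ext (by exact A.mul_comm' _ a.2 _ b.2) }

end CommAlgebraicRing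

end



noncomputable section AuxStmt0

open MvPolynomial

private theorem exists_eval_points {K X : Type} [Field K] :
    ∀ {m : ℕ} (f : Fin m → X → K), LinearIndependent K f →
      ∃ x : Fin m → X, (Matrix.of fun i j => f i (x j)).det ≠ 0 := by
  intro m
  induction m with
  | zero =>
    intro f _
    exact ⟨fun i => i.elim0, by simp [Matrix.det_fin_zero]⟩
  | succ m ih =>
    intro f hf
    obtain ⟨x', hx'⟩ := ih (fun i => f i.succ) (hf.comp Fin.succ (Fin.succ_injective m))
    by_contra hno
    push_neg at hno
    set N : Fin (m + 1) → Matrix (Fin m) (Fin m) K :=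
      fun i => Matrix.of fun i' j' => f (i.succAbove i') (x' j') with hN
    have hsum : (∑ i : Fin (m + 1), ((-1 : K) ^ i.val * (N i).det) • f i) = 0 := by
      funext y
      have h0 := hno (Fin.cons y x')
      rw [Matrix.det_succ_column_zero] at h0
      rw [Finset.sum_apply]
      simp only [Pi.zero_apply]
      rw [← h0]
      refine Finset.sum_congr rfl fun i _ => ?_
      have hsub : (Matrix.of fun i j => f i ((Fin.cons y x' : Fin (m + 1) → X) j)).submatrix
          i.succAbove Fin.succ = N i := by
        ext i' j'
        simp [hN]
      rw [hsub]
      simp only [Pi.smul_apply, smul_eq_mul, Matrix.of_apply, Fin.cons_zero]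
      ring
    have hz := Fintype.linearIndependent_iff.1 hf _ hsum
    have h00 := hz 0
    simp only [Fin.val_zero, pow_zero, one_mul] at h00
    apply hx'
    have hEq : (Matrix.of fun i j => f i.succ (x' j)) = N 0 := by
      ext i' j'
      simp [hN, Fin.succAbove_zero]
    rw [hEq, h00]

private theorem AlgebraicRing.key {K : Type} [Field K] [IsAlgClosed K] (A : AlgebraicRing K)
    (mul' : A.Elt → A.Elt → A.Elt)
    (hassoc : ∀ x y z, mul' (mul' x y) z = mul' x (mul' y z))
    (hone : ∀ x, mul' 1 x = x)
    (P : Fin A.n → MvPolynomial (Fin A.n ⊕ Fin A.n) K)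
    (hP : ∀ x y : A.Elt, ∀ i, (mul' x y).1 i = MvPolynomial.eval (Sum.elim x.1 y.1) (P i)) :
    ∃ χ : MvPolynomial (Fin A.n) K, ∀ a : A.Elt,
      ((∃ a', mul' a a' = 1 ∧ mul' a' a = 1) → MvPolynomial.eval a.1 χ ≠ 0) ∧
      (MvPolynomial.eval a.1 χ ≠ 0 → ∃ b, mul' a b = 1) := by
  classical
  have heb : ∀ {σ : Type} (x : Fin A.n → K) (g : σ → MvPolynomial (Fin A.n) K)
      (p : MvPolynomial σ K), eval x (bind₁ g p) = eval (fun i => eval x (g i)) p :=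
    fun x g p => eval₂Hom_bind₁ (RingHom.id K) x g p
  set xbar : Fin A.n → (A.Elt → K) := fun i => fun b => b.1 i with hxbar
  set Sg : Set (A.Elt → K) :=
    Set.range (fun p : A.Elt × Fin A.n => fun b => (mul' p.1 b).1 p.2) with hSg
  set W : Submodule K (A.Elt → K) := Submodule.span K Sg with hW
  have hgen : ∀ (c : A.Elt) (i : Fin A.n), (fun b => (mul' c b).1 i) ∈ W :=
    fun c i => Submodule.subset_span ⟨(c, i), rfl⟩
  have hx : ∀ i, xbar i ∈ W := by
    intro i
    have hxe : xbar i = fun b => (mul' 1 b).1 i := by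
      funext b; rw [hone]
    rw [hxe]; exact hgen 1 i
  set L : A.Elt → (A.Elt → K) →ₗ[K] (A.Elt → K) :=
    fun a => LinearMap.funLeft K K (fun b => mul' a b) with hL
  have hLapp : ∀ a w b, L a w b = w (mul' a b) := fun a w b => rfl
  have hstab : ∀ (a : A.Elt), ∀ w ∈ W, L a w ∈ W := by
    intro a w hw
    have hsub : Submodule.map (L a) W ≤ W := by
      rw [hW, Submodule.map_span]
      refine Submodule.span_le.2 ?_
      rintro _ ⟨_, ⟨⟨c, i⟩, rfl⟩, rfl⟩
      refine Submodule.subset_span ⟨(mul' c a, i), ?_⟩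
      funext b
      show (mul' (mul' c a) b).1 i = (fun b => (mul' c b).1 i) (mul' a b)
      rw [hassoc]
    exact hsub ⟨w, hw, rfl⟩
  have hfdT : FiniteDimensional K W := by
    set T : Set (A.Elt → K) := ⋃ i : Fin A.n,
      (fun d : ((Fin A.n ⊕ Fin A.n) →₀ ℕ) =>
        (fun b : A.Elt => ∏ r : Fin A.n, b.1 r ^ d (Sum.inr r))) '' ((P i).support : Set _)
      with hT
    have hTfin : T.Finite := Set.finite_iUnion fun i => ((P i).support.finite_toSet).image _
    haveI : FiniteDimensional K (Submodule.span K T) := FiniteDimensional.span_of_finite K hTfin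
    refine Submodule.finiteDimensional_of_le (?_ : W ≤ Submodule.span K T)
    rw [hW]
    refine Submodule.span_le.2 ?_
    rintro _ ⟨⟨c, i⟩, rfl⟩
    show (fun b : A.Elt => (mul' c b).1 i) ∈ Submodule.span K T
    have hdecomp : (fun b : A.Elt => (mul' c b).1 i) =
        ∑ d ∈ (P i).support, ((P i).coeff d * ∏ l : Fin A.n, c.1 l ^ d (Sum.inl l)) •
          (fun b : A.Elt => ∏ r : Fin A.n, b.1 r ^ d (Sum.inr r)) := by
      funext b
      rw [Finset.sum_apply, hP, MvPolynomial.eval_eq']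
      refine Finset.sum_congr rfl fun d _ => ?_
      rw [Fintype.prod_sum_type (f := fun j => Sum.elim c.1 b.1 j ^ d j)]
      simp only [Sum.elim_inl, Sum.elim_inr, Pi.smul_apply, smul_eq_mul]
      ring
    rw [hdecomp]
    refine Submodule.sum_mem _ fun d hd => Submodule.smul_mem _ _ (Submodule.subset_span ?_)
    rw [hT]
    exact Set.mem_iUnion.2 ⟨i, Set.mem_image_of_mem _ (Finset.mem_coe.2 hd)⟩
  set m := Module.finrank K W with hm
  set hb := Module.finBasis K W with hhb
  set h : Fin m → (A.Elt → K) := fun i => ((hb i : W) : A.Elt → K) with hh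
  have hhW : ∀ i, h i ∈ W := fun i => (hb i).2
  have hind : LinearIndependent K h :=
    hb.linearIndependent.map' W.subtype (Submodule.ker_subtype W)
  obtain ⟨bp, hdetB⟩ := exists_eval_points h hind
  have hvanish : ∀ w ∈ W, (∀ s, w (bp s) = 0) → w = 0 := by
    intro w hw h0
    set μ : Fin m → K := fun t => hb.repr ⟨w, hw⟩ t with hμ
    have hrep : (∑ t, μ t • h t) = w := by
      have h1 := hb.sum_repr ⟨w, hw⟩
      calc (∑ t, μ t • h t)
          = ((∑ i, hb.repr ⟨w, hw⟩ i • hb i : W) : A.Elt → K) := by simp only [hh, hμ, Submodule.coe_sum, Submodule.coe_smul]; rfl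
        _ = w := by rw [h1]
    by_contra hw0
    have hμ0 : μ ≠ 0 := by
      intro hzz
      apply hw0
      rw [← hrep, hzz]
      simp
    refine hdetB (Matrix.exists_vecMul_eq_zero_iff.1 ⟨μ, hμ0, ?_⟩)
    funext s
    have h3 := congrFun hrep (bp s)
    rw [Finset.sum_apply] at h3
    simp only [Pi.smul_apply, smul_eq_mul] at h3
    have hss : ∑ t, μ t * h t (bp s) = 0 := by rw [h3, h0 s]
    simpa [Matrix.vecMul, dotProduct] using hss
  set π : MvPolynomial (Fin A.n) K →ₗ[K] (A.Elt → K) :=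
    { toFun := fun q => fun b => eval b.1 q
      map_add' := fun p q => by funext b; simp
      map_smul' := fun r q => by funext b; simp } with hπ
  have hWπ : W ≤ LinearMap.range π := by
    rw [hW]
    refine Submodule.span_le.2 ?_
    rintro _ ⟨⟨c, i⟩, rfl⟩
    refine ⟨bind₁ (Sum.elim (fun l => MvPolynomial.C (c.1 l)) MvPolynomial.X) (P i), ?_⟩
    funext b
    show eval b.1 (bind₁ _ (P i)) = (mul' c b).1 i
    rw [heb, hP]
    have harg : (fun j => eval b.1 (Sum.elim (fun l => MvPolynomial.C (c.1 l))
        MvPolynomial.X j)) = Sum.elim c.1 b.1 := by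
      funext j; cases j <;> simp
    rw [harg]
  choose Hpoly hHpoly using fun i => hWπ (hhW i)
  set Q : Matrix (Fin m) (Fin m) (MvPolynomial (Fin A.n) K) :=
    Matrix.of fun i s =>
      bind₁ (fun j => bind₁ (Sum.elim MvPolynomial.X (fun r => MvPolynomial.C ((bp s).1 r)))
        (P j)) (Hpoly i) with hQ
  have hQeval : ∀ a : A.Elt,
      eval a.1 Q.det = (Matrix.of fun i s => h i (mul' a (bp s))).det := by
    intro a
    rw [RingHom.map_det]
    congr 1
    ext i s
    show eval a.1 (Q i s) = h i (mul' a (bp s))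
    rw [hQ]
    show eval a.1 (bind₁ _ (Hpoly i)) = h i (mul' a (bp s))
    rw [heb]
    have hvec : (fun j => eval a.1 (bind₁
        (Sum.elim MvPolynomial.X (fun r => MvPolynomial.C ((bp s).1 r))) (P j)))
        = (mul' a (bp s)).1 := by
      funext j
      rw [heb, hP]
      have harg : (fun u => eval a.1 (Sum.elim MvPolynomial.X
          (fun r => MvPolynomial.C ((bp s).1 r)) u)) = Sum.elim a.1 (bp s).1 := by
        funext u; cases u <;> simp
      rw [harg]
    rw [hvec]
    exact congrFun (hHpoly i) (mul' a (bp s))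
  refine ⟨Q.det, fun a => ⟨?_, ?_⟩⟩
  · rintro ⟨a', ha1, ha2⟩
    rw [hQeval]
    intro hdet0
    obtain ⟨v, hv0, hvB⟩ := Matrix.exists_vecMul_eq_zero_iff.2 hdet0
    have hgW : (∑ i, v i • L a (h i)) ∈ W :=
      Submodule.sum_mem _ fun i _ => Submodule.smul_mem _ _ (hstab a _ (hhW i))
    have hg0 : (∑ i, v i • L a (h i)) = 0 := by
      refine hvanish _ hgW fun s => ?_
      have h4 := congrFun hvB s
      rw [Finset.sum_apply]
      simp only [Pi.smul_apply, smul_eq_mul, hLapp]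
      simpa [Matrix.vecMul, dotProduct] using h4
    have hvc : ∀ c : A.Elt, ∑ i, v i * h i c = 0 := by
      intro c
      have h5 := congrFun hg0 (mul' a' c)
      rw [Finset.sum_apply] at h5
      simp only [Pi.smul_apply, smul_eq_mul, hLapp] at h5
      rw [← hassoc, ha1, hone] at h5
      simpa using h5
    have hva : ∀ i, v i = 0 := by
      refine Fintype.linearIndependent_iff.1 hind _ ?_
      funext c
      rw [Finset.sum_apply]
      simpa [smul_eq_mul] using hvc c
    exact hv0 (funext hva)
  · intro hne
    rw [hQeval] at hne
    have hstabi : ∀ i, L a (h i) ∈ W := fun i => hstab a _ (hhW i)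
    have hindW : LinearIndependent K (fun i => (⟨L a (h i), hstabi i⟩ : W)) := by
      rw [Fintype.linearIndependent_iff]
      intro v hv
      have hfun : (∑ i, v i • L a (h i)) = 0 := by
        have h2 := congrArg (Subtype.val) hv
        simpa using h2
      have hvB : Matrix.vecMul v (Matrix.of fun i s => h i (mul' a (bp s))) = 0 := by
        funext s
        have h6 := congrFun hfun (bp s)
        rw [Finset.sum_apply] at h6
        simp only [Pi.smul_apply, smul_eq_mul, hLapp] at h6
        simpa [Matrix.vecMul, dotProduct] using h6
      intro i
      by_contra hvi
      exact hne (Matrix.exists_vecMul_eq_zero_iff.1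
        ⟨v, fun hzz => hvi (congrFun hzz i), hvB⟩)
    have hspan := hindW.span_eq_top_of_card_eq_finrank'
      (by rw [Fintype.card_fin])
    have hinj : ∀ b c : A.Elt, mul' a b = mul' a c → b = c := by
      intro b c hbc
      have hxi : ∀ i : Fin A.n, ∃ cf : Fin m → K,
          ∀ y : A.Elt, ∑ j, cf j * h j (mul' a y) = y.1 i := by
        intro i
        have hmem : (⟨xbar i, hx i⟩ : W) ∈
            Submodule.span K (Set.range fun i => (⟨L a (h i), hstabi i⟩ : W)) := by
          rw [hspan]; exact Submodule.mem_top
        obtain ⟨cf, hcf⟩ := (Submodule.mem_span_range_iff_exists_fun K).1 hmem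
        refine ⟨cf, fun y => ?_⟩
        have h8 : (∑ j, cf j • L a (h j)) = xbar i := by
          calc (∑ j, cf j • L a (h j))
              = ((∑ j, cf j • (⟨L a (h j), hstabi j⟩ : W) : W) : A.Elt → K) := by simp
            _ = ((⟨xbar i, hx i⟩ : W) : A.Elt → K) := by rw [hcf]
            _ = xbar i := rfl
        have h9 := congrFun h8 y
        rw [Finset.sum_apply] at h9
        simpa [smul_eq_mul, hLapp, hxbar] using h9
      apply Subtype.ext
      funext i
      obtain ⟨cf, hcf⟩ := hxi i
      rw [← hcf b, ← hcf c, hbc]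
    obtain ⟨S₀, hS₀⟩ := A.carrier_closed
    set p : Fin A.n → MvPolynomial (Fin A.n) K :=
      fun i => bind₁ (Sum.elim (fun l => MvPolynomial.C (a.1 l)) MvPolynomial.X) (P i) with hp
    have hpv : ∀ v : A.Elt, (fun i => eval v.1 (p i)) = (mul' a v).1 := by
      intro v
      funext i
      rw [hp]
      show eval v.1 (bind₁ _ (P i)) = (mul' a v).1 i
      rw [heb, hP]
      have harg : (fun u => eval v.1 (Sum.elim (fun l => MvPolynomial.C (a.1 l))
          MvPolynomial.X u)) = Sum.elim a.1 v.1 := by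
        funext u; cases u <;> simp
      rw [harg]
    have hcar : A.carrier = MvPolynomial.zeroLocus K (Ideal.span S₀) := by
      simp only [MvPolynomial.zeroLocus_span, hS₀, MvPolynomial.coe_aeval_eq_eval]; rfl
    have hmapsto : (MvPolynomial.zeroLocus K (Ideal.span S₀)).MapsTo
        (fun v i => eval v (p i)) (MvPolynomial.zeroLocus K (Ideal.span S₀)) := by
      rw [← hcar]
      intro v hv
      show (fun i => eval v (p i)) ∈ A.carrier
      rw [show (fun i => eval v (p i)) = (mul' a ⟨v, hv⟩).1 from hpv ⟨v, hv⟩]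
      exact (mul' a ⟨v, hv⟩).2
    have hinjon : (MvPolynomial.zeroLocus K (Ideal.span S₀)).InjOn (fun v i => eval v (p i)) := by
      rw [← hcar]
      intro v hv w hw hvw
      have hmm : (mul' a ⟨v, hv⟩) = mul' a ⟨w, hw⟩ := by
        apply Subtype.ext
        rw [← hpv ⟨v, hv⟩, ← hpv ⟨w, hw⟩]
        exact hvw
      exact congrArg Subtype.val (hinj _ _ hmm)
    have hsurj := ax_grothendieck_zeroLocus (Ideal.span S₀) p hmapsto hinjon
    rw [← hcar] at hsurj
    obtain ⟨w, hw, hweq⟩ := hsurj (show A.one ∈ A.carrier from A.one_mem)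
    refine ⟨⟨w, hw⟩, ?_⟩
    apply Subtype.ext
    show (mul' a ⟨w, hw⟩).1 = A.one
    rw [← hpv ⟨w, hw⟩]
    exact hweq

end AuxStmt0

/-- For an algebraic ring `A` over an algebraically closed field `K`, the group
of units `Aˣ` is a principal open subset of `A`: there is a regular function `χ` (the
restriction of a polynomial) with `Aˣ = {a | χ(a) ≠ 0}`. -/
theorem stmt_0 (K : Type) [Field K] [IsAlgClosed K] (A : AlgebraicRing K) :
    ∃ χ : MvPolynomial (Fin A.n) K,
      {a : A.Elt | IsUnit a} = {a : A.Elt | MvPolynomial.eval a.1 χ ≠ 0} := by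
  obtain ⟨P, hPspec⟩ := A.mul_poly
  have h1 : ∀ x y : A.Elt, ∀ i, (x * y).1 i = MvPolynomial.eval (Sum.elim x.1 y.1) (P i) :=
    fun x y i => hPspec x.1 y.1 i
  obtain ⟨χ₁, hχ₁⟩ := A.key (fun x y => x * y) (fun x y z => mul_assoc x y z)
    (fun x => one_mul x) P h1
  have h2 : ∀ x y : A.Elt, ∀ i,
      (y * x).1 i = MvPolynomial.eval (Sum.elim x.1 y.1) (MvPolynomial.rename Sum.swap (P i)) := by
    intro x y i
    rw [MvPolynomial.eval_rename]
    have hsw : (Sum.elim x.1 y.1) ∘ Sum.swap = Sum.elim y.1 x.1 := by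
      funext u; cases u <;> rfl
    rw [hsw]
    exact hPspec y.1 x.1 i
  obtain ⟨χ₂, hχ₂⟩ := A.key (fun x y => y * x) (fun x y z => (mul_assoc z y x).symm)
    (fun x => mul_one x) (fun i => MvPolynomial.rename Sum.swap (P i)) h2
  refine ⟨χ₁ * χ₂, ?_⟩
  ext a
  simp only [Set.mem_setOf_eq, map_mul]
  constructor
  · intro hu
    obtain ⟨b, hab, hba⟩ := isUnit_iff_exists.1 hu
    exact mul_ne_zero ((hχ₁ a).1 ⟨b, hab, hba⟩) ((hχ₂ a).1 ⟨b, hba, hab⟩)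
  · intro hne
    obtain ⟨b, hb⟩ := (hχ₁ a).2 (left_ne_zero_of_mul hne)
    obtain ⟨c, hc⟩ := (hχ₂ a).2 (right_ne_zero_of_mul hne)
    have hb' : a * b = 1 := hb
    have hc' : c * a = 1 := hc
    refine isUnit_iff_exists.2 ⟨b, hb', ?_⟩
    have hcb : c = b := by
      calc c = c * (a * b) := by rw [hb', mul_one]
      _ = (c * a) * b := by rw [mul_assoc]
      _ = b := by rw [hc', one_mul]
    rw [← hcb]
    exact hc'
end

section
/- Let $A$ be an algebraic ring over an algebraically closed field $K$. Then the inversion map $A^{\times} \to A^{\times}$, $t \mapsto t^{-1}$, is a regular map of varieties; in particular $(A^{\times}, \mu)$ is an algebraic group. -/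
noncomputable section UnitsProof

open MvPolynomial

namespace AlgebraicRingUnits

variable {K : Type} [Field K]

/-- The "left part" of a monomial in `2n` variables. -/
def mL {n : ℕ} (d : Fin n ⊕ Fin n →₀ ℕ) : MvPolynomial (Fin n) K :=
  monomial (Finsupp.sumFinsuppEquivProdFinsupp d).1 1

/-- The "right part" of a monomial in `2n` variables. -/
def mR {n : ℕ} (d : Fin n ⊕ Fin n →₀ ℕ) : MvPolynomial (Fin n) K :=
  monomial (Finsupp.sumFinsuppEquivProdFinsupp d).2 1

lemma eval_mL {n : ℕ} (a : Fin n → K) (d : Fin n ⊕ Fin n →₀ ℕ) :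
    eval a (mL (K := K) d) = ∏ i, a i ^ d (Sum.inl i) := by
  rw [mL, eval_monomial, one_mul, Finsupp.prod_fintype _ _ (fun i => pow_zero _)]
  exact Finset.prod_congr rfl fun i _ => by rw [Finsupp.fst_sumFinsuppEquivProdFinsupp]

lemma eval_mR {n : ℕ} (a : Fin n → K) (d : Fin n ⊕ Fin n →₀ ℕ) :
    eval a (mR (K := K) d) = ∏ i, a i ^ d (Sum.inr i) := by
  rw [mR, eval_monomial, one_mul, Finsupp.prod_fintype _ _ (fun i => pow_zero _)]
  exact Finset.prod_congr rfl fun i _ => by rw [Finsupp.snd_sumFinsuppEquivProdFinsupp]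

lemma eval_sumElim {n : ℕ} (p : MvPolynomial (Fin n ⊕ Fin n) K) (a x : Fin n → K) :
    eval (Sum.elim a x) p =
      ∑ d ∈ p.support, coeff d p * (eval a (mL d) * eval x (mR d)) := by
  rw [eval_eq']
  refine Finset.sum_congr rfl fun d _ => ?_
  rw [eval_mL, eval_mR]
  congr 1
  rw [Fintype.prod_sum_type (fun s : Fin n ⊕ Fin n => Sum.elim a x s ^ d s)]
  simp

lemma eval_bind1 {σ τ : Type} (g : σ → MvPolynomial τ K) (y : τ → K) (q : MvPolynomial σ K) :
    eval y (bind₁ g q) = eval (fun i => eval y (g i)) q := by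
  have key : ∀ {σ' : Type} (y' : σ' → K) (p : MvPolynomial σ' K), aeval y' p = eval y' p :=
    fun y' p => congrArg (fun F : MvPolynomial _ K →+* K => F p) (coe_aeval_eq_eval (f := y'))
  have h := aeval_bind₁ (R := K) (S := K) y g q
  rw [key, key] at h
  rw [h]
  exact congrArg (fun z => eval z q) (funext fun i => key y (g i))

variable (A : AlgebraicRing K)

/-- Polynomials as functions on `A.Elt`. -/
def Phi : MvPolynomial (Fin A.n) K →ₗ[K] (A.Elt → K) where
  toFun q x := eval x.1 q
  map_add' p q := funext fun x => by simp
  map_smul' c p := funext fun x => by simp [smul_eval]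

@[simp] lemma Phi_apply (q : MvPolynomial (Fin A.n) K) (x : A.Elt) :
    Phi A q x = eval x.1 q := rfl

/-- Pullback along left multiplication by `a`. -/
def T (a : A.Elt) : (A.Elt → K) →ₗ[K] (A.Elt → K) where
  toFun f x := f (a * x)
  map_add' f g := rfl
  map_smul' c f := rfl

@[simp] lemma T_apply (a : A.Elt) (f : A.Elt → K) (x : A.Elt) : T A a f x = f (a * x) := rfl

lemma T_T (a b : A.Elt) (f : A.Elt → K) : T A b (T A a f) = T A (a * b) f :=
  funext fun x => by simp [mul_assoc]

lemma T_one (f : A.Elt → K) : T A 1 f = f := funext fun x => by simp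

lemma T_stable_span (b : A.Elt) (s : Set (A.Elt → K)) (hs : ∀ f ∈ s, T A b f ∈ s)
    {f : A.Elt → K} (hf : f ∈ Submodule.span K s) : T A b f ∈ Submodule.span K s := by
  induction hf using Submodule.span_induction with
  | mem f hf => exact Submodule.subset_span (hs f hf)
  | zero => simpa using Submodule.zero_mem _
  | add u v hu hv ihu ihv => rw [map_add]; exact Submodule.add_mem _ ihu ihv
  | smul c u hu ihu => rw [map_smul]; exact Submodule.smul_mem _ _ ihu

variable (mulP : Fin A.n → MvPolynomial (Fin A.n ⊕ Fin A.n) K)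
  (hmulP : ∀ x y : Fin A.n → K, ∀ i, A.mul x y i = eval (Sum.elim x y) (mulP i))

include hmulP in
lemma T_phi (q : MvPolynomial (Fin A.n) K) (a : A.Elt) :
    T A a (Phi A q) = ∑ d ∈ (bind₁ mulP q).support,
      (coeff d (bind₁ mulP q) * eval a.1 (mL d)) • Phi A (mR d) := by
  funext x
  have h1 : (a * x).1 = fun i => eval (Sum.elim a.1 x.1) (mulP i) :=
    funext fun i => hmulP _ _ i
  simp only [T_apply, Phi_apply, Finset.sum_apply, Pi.smul_apply, smul_eq_mul]
  rw [h1, ← eval_bind1, eval_sumElim]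
  exact Finset.sum_congr rfl fun d _ => by ring

/-- The span of the orbit of `Phi q` under all the `T a`. -/
def U (q : MvPolynomial (Fin A.n) K) : Submodule K (A.Elt → K) :=
  Submodule.span K (Set.range fun a : A.Elt => T A a (Phi A q))

lemma phi_mem_U (q : MvPolynomial (Fin A.n) K) : Phi A q ∈ U A q :=
  Submodule.subset_span ⟨1, T_one A _⟩

lemma T_mem_U (q : MvPolynomial (Fin A.n) K) (b : A.Elt) {f} (hf : f ∈ U A q) :
    T A b f ∈ U A q := by
  refine T_stable_span A b _ ?_ hf
  rintro f ⟨a, rfl⟩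
  exact ⟨a * b, (T_T A a b _).symm⟩

include hmulP in
lemma U_le (q : MvPolynomial (Fin A.n) K) : U A q ≤ Submodule.span K
    ((fun d => Phi A (mR d)) '' ((bind₁ mulP q).support : Set (Fin A.n ⊕ Fin A.n →₀ ℕ))) := by
  rw [U, Submodule.span_le]
  rintro f ⟨a, rfl⟩
  show T A a (Phi A q) ∈ _
  rw [T_phi A mulP hmulP]
  refine Submodule.sum_mem _ fun d hd => Submodule.smul_mem _ _ (Submodule.subset_span ?_)
  exact ⟨d, hd, rfl⟩

include hmulP in
lemma fd_U (q : MvPolynomial (Fin A.n) K) : FiniteDimensional K (U A q) :=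
  haveI := FiniteDimensional.span_of_finite K
    (((bind₁ mulP q).support.finite_toSet).image fun d => Phi A (mR d))
  Submodule.finiteDimensional_of_le (U_le A mulP hmulP q)

include hmulP in
lemma T_phi_mem_range (q : MvPolynomial (Fin A.n) K) (a : A.Elt) :
    T A a (Phi A q) ∈ LinearMap.range (Phi A) := by
  refine ⟨∑ d ∈ (bind₁ mulP q).support, (coeff d (bind₁ mulP q) * eval a.1 (mL d)) • mR d, ?_⟩
  rw [map_sum, T_phi A mulP hmulP]
  exact Finset.sum_congr rfl fun d _ => by rw [map_smul]

/-- The full finite-dimensional `T`-stable space. -/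
def Vsp : Submodule K (A.Elt → K) :=
  Submodule.span K
    ((⋃ i : Fin A.n, Set.range fun a : A.Elt => T A a (Phi A (X i))) ∪
      Set.range fun a : A.Elt => T A a (Phi A 1))

lemma Vsp_eq : Vsp A = (⨆ i : Fin A.n, U A (X i)) ⊔ U A 1 := by
  rw [Vsp, Submodule.span_union, Submodule.span_iUnion]
  rfl

lemma phi_X_mem_V (i : Fin A.n) : Phi A (X i) ∈ Vsp A := by
  rw [Vsp_eq]
  exact Submodule.mem_sup_left (Submodule.mem_iSup_of_mem i (phi_mem_U A _))

lemma phi_one_mem_V : Phi A 1 ∈ Vsp A := by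
  rw [Vsp_eq]
  exact Submodule.mem_sup_right (phi_mem_U A 1)

lemma T_mem_V (b : A.Elt) {f} (hf : f ∈ Vsp A) : T A b f ∈ Vsp A := by
  refine T_stable_span A b _ ?_ hf
  rintro f (hf | hf)
  · obtain ⟨i, hi⟩ := Set.mem_iUnion.1 hf
    obtain ⟨a, rfl⟩ := hi
    exact Or.inl (Set.mem_iUnion.2 ⟨i, ⟨a * b, (T_T A a b _).symm⟩⟩)
  · obtain ⟨a, rfl⟩ := hf
    exact Or.inr ⟨a * b, (T_T A a b _).symm⟩

lemma V_le_range (mulP : Fin A.n → MvPolynomial (Fin A.n ⊕ Fin A.n) K)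
    (hmulP : ∀ x y : Fin A.n → K, ∀ i, A.mul x y i = eval (Sum.elim x y) (mulP i)) :
    Vsp A ≤ LinearMap.range (Phi A) := by
  rw [Vsp, Submodule.span_le]
  rintro f (hf | hf)
  · obtain ⟨i, hi⟩ := Set.mem_iUnion.1 hf
    obtain ⟨a, rfl⟩ := hi
    exact T_phi_mem_range A mulP hmulP _ a
  · obtain ⟨a, rfl⟩ := hf
    exact T_phi_mem_range A mulP hmulP _ a

lemma fd_V (mulP : Fin A.n → MvPolynomial (Fin A.n ⊕ Fin A.n) K)
    (hmulP : ∀ x y : Fin A.n → K, ∀ i, A.mul x y i = eval (Sum.elim x y) (mulP i)) :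
    FiniteDimensional K (Vsp A) := by
  rw [Vsp_eq]
  haveI : ∀ i : Fin A.n, FiniteDimensional K (U A (X i)) := fun i => fd_U A mulP hmulP _
  haveI : FiniteDimensional K (U A (1 : MvPolynomial (Fin A.n) K)) := fd_U A mulP hmulP _
  infer_instance

end AlgebraicRingUnits
end UnitsProof

set_option maxHeartbeats 1000000 in
open MvPolynomial AlgebraicRingUnits in
/-- For an algebraic ring `A` over an algebraically closed field `K`, the
inversion map `Aˣ → Aˣ`, `t ↦ t⁻¹`, is regular: `Aˣ` is the principal open set `D(χ)` and
each coordinate of the inverse is of the form `P i / χ ^ k` on `D(χ)`.  In particular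
`(Aˣ, ·)` is an algebraic group. -/
theorem stmt_1 (K : Type) [Field K] [IsAlgClosed K] (A : AlgebraicRing K) :
    ∃ (χ : MvPolynomial (Fin A.n) K) (k : ℕ) (P : Fin A.n → MvPolynomial (Fin A.n) K),
      ({a : A.Elt | IsUnit a} = {a : A.Elt | MvPolynomial.eval a.1 χ ≠ 0}) ∧
      ∀ u : (A.Elt)ˣ, ∀ i : Fin A.n,
        ((u⁻¹ : (A.Elt)ˣ) : A.Elt).1 i * (MvPolynomial.eval ((u : A.Elt)).1 χ) ^ k =
          MvPolynomial.eval ((u : A.Elt)).1 (P i) := by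
  classical
  obtain ⟨mulP, hmulP⟩ := A.mul_poly
  haveI : FiniteDimensional K (Vsp A) := fd_V A mulP hmulP
  set m := Module.finrank K (Vsp A) with hm
  let bV : Module.Basis (Fin m) K (Vsp A) := Module.finBasis K (Vsp A)
  have hrange : ∀ j : Fin m, ∃ q, Phi A q = (bV j : A.Elt → K) := fun j =>
    V_le_range A mulP hmulP (bV j).2
  choose qj hqj using hrange
  obtain ⟨W, hW⟩ := Submodule.exists_isCompl (Vsp A)
  let π : (A.Elt → K) →ₗ[K] Vsp A := (Vsp A).linearProjOfIsCompl W hW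
  let Coord : Fin m → ((A.Elt → K) →ₗ[K] K) := fun i => (bV.coord i).comp π
  have hCoord : ∀ v : A.Elt → K, ∀ hv : v ∈ Vsp A,
      v = ∑ i, Coord i v • (bV i : A.Elt → K) := by
    intro v hv
    have h1 : π v = ⟨v, hv⟩ := Submodule.linearProjOfIsCompl_apply_left hW ⟨v, hv⟩
    calc v = ((⟨v, hv⟩ : Vsp A) : A.Elt → K) := rfl
    _ = ((∑ i, bV.repr ⟨v, hv⟩ i • bV i : Vsp A) : A.Elt → K) := by rw [bV.sum_repr]
    _ = ∑ i, bV.repr ⟨v, hv⟩ i • (bV i : A.Elt → K) := by push_cast; rfl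
    _ = ∑ i, Coord i v • (bV i : A.Elt → K) := by
          refine Finset.sum_congr rfl fun i _ => ?_
          congr 1
          show bV.repr ⟨v, hv⟩ i = (bV.coord i) (π v)
          rw [h1, Module.Basis.coord_apply]
  let gMat : Matrix (Fin m) (Fin m) (MvPolynomial (Fin A.n) K) :=
    Matrix.of fun i j => ∑ d ∈ (bind₁ mulP (qj j)).support,
      MvPolynomial.C (MvPolynomial.coeff d (bind₁ mulP (qj j)) * Coord i (Phi A (mR d))) * mL d
  let E : A.Elt → Matrix (Fin m) (Fin m) K := fun a => gMat.map (MvPolynomial.eval a.1)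
  have hEdef : ∀ (a : A.Elt) i j, E a i j = MvPolynomial.eval a.1 (gMat i j) := fun a i j => rfl
  have hgdef : ∀ i j, gMat i j = ∑ d ∈ (bind₁ mulP (qj j)).support,
      MvPolynomial.C (MvPolynomial.coeff d (bind₁ mulP (qj j)) * Coord i (Phi A (mR d))) * mL d :=
    fun i j => rfl
  have hE : ∀ (a : A.Elt) i j, E a i j = Coord i (T A a (bV j : A.Elt → K)) := by
    intro a i j
    rw [← hqj j, T_phi A mulP hmulP, map_sum, hEdef, hgdef, map_sum]
    refine Finset.sum_congr rfl fun d _ => ?_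
    rw [map_mul, eval_C, map_smul, smul_eq_mul]
    ring
  have hT : ∀ (a : A.Elt) (j : Fin m),
      T A a (bV j : A.Elt → K) = ∑ i, E a i j • (bV i : A.Elt → K) := by
    intro a j
    have hmem : T A a (bV j : A.Elt → K) ∈ Vsp A := T_mem_V A a (bV j).2
    refine (hCoord _ hmem).trans ?_
    exact Finset.sum_congr rfl fun i _ => by rw [hE]
  have li : LinearIndependent K (fun i : Fin m => (bV i : A.Elt → K)) :=
    bV.linearIndependent.map' (Vsp A).subtype (Submodule.ker_subtype _)
  have huniq : ∀ c c' : Fin m → K,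
      ∑ i, c i • (bV i : A.Elt → K) = ∑ i, c' i • (bV i : A.Elt → K) → c = c' := by
    intro c c' h
    have h0 : ∑ i, (c i - c' i) • (bV i : A.Elt → K) = 0 := by
      simp only [sub_smul]
      rw [Finset.sum_sub_distrib, h, sub_self]
    have h1 := Fintype.linearIndependent_iff.1 li _ h0
    funext i
    exact sub_eq_zero.1 (h1 i)
  have hEmul : ∀ a b : A.Elt, E (a * b) = E b * E a := by
    intro a b
    have hcol : ∀ j, (fun l => E (a * b) l j) = fun l => (E b * E a) l j := by
      intro j
      apply huniq
      have hc : ∑ l, E (a * b) l j • (bV l : A.Elt → K) = T A (a * b) (bV j : A.Elt → K) :=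
        (hT _ j).symm
      rw [hc, ← T_T A a b]
      calc T A b (T A a (bV j : A.Elt → K))
          = T A b (∑ i, E a i j • (bV i : A.Elt → K)) := by rw [hT]
        _ = ∑ i, E a i j • T A b (bV i : A.Elt → K) := by
              rw [map_sum]; exact Finset.sum_congr rfl fun i _ => by rw [map_smul]
        _ = ∑ i, E a i j • ∑ l, E b l i • (bV l : A.Elt → K) := by
              exact Finset.sum_congr rfl fun i _ => by rw [hT]
        _ = ∑ i, ∑ l, (E b l i * E a i j) • (bV l : A.Elt → K) := by
              refine Finset.sum_congr rfl fun i _ => ?_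
              rw [Finset.smul_sum]
              exact Finset.sum_congr rfl fun l _ => by rw [smul_smul, mul_comm]
        _ = ∑ l, ∑ i, (E b l i * E a i j) • (bV l : A.Elt → K) := Finset.sum_comm
        _ = ∑ l, (E b * E a) l j • (bV l : A.Elt → K) := by
              refine Finset.sum_congr rfl fun l _ => ?_
              rw [← Finset.sum_smul, Matrix.mul_apply]
    ext i j
    exact congrFun (hcol j) i
  have hEone : E (1 : A.Elt) = 1 := by
    have hcol : ∀ j, (fun l => E (1 : A.Elt) l j) = fun l => (1 : Matrix (Fin m) (Fin m) K) l j := by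
      intro j
      apply huniq
      have hc : ∑ l, E (1 : A.Elt) l j • (bV l : A.Elt → K) = T A 1 (bV j : A.Elt → K) :=
        (hT _ j).symm
      rw [hc, T_one]
      simp [Matrix.one_apply, ite_smul]
    ext i j
    exact congrFun (hcol j) i
  set χ := gMat.det with hχdef
  have hχ : ∀ a : A.Elt, MvPolynomial.eval a.1 χ = (E a).det := fun a =>
    RingHom.map_det (MvPolynomial.eval a.1) gMat
  have unit_det : ∀ u : (A.Elt)ˣ, MvPolynomial.eval ((u : A.Elt)).1 χ ≠ 0 := by
    intro u h0
    have h1 : E ((u⁻¹ : (A.Elt)ˣ) : A.Elt) * E ((u : A.Elt)) = 1 := by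
      rw [← hEmul, Units.mul_inv, hEone]
    have h2 := congrArg Matrix.det h1
    rw [Matrix.det_mul, Matrix.det_one, ← hχ, ← hχ, h0, mul_zero] at h2
    exact zero_ne_one h2
  have det_unit : ∀ a : A.Elt, MvPolynomial.eval a.1 χ ≠ 0 → IsUnit a := by
    intro a hne
    have hu : IsUnit (E a).det := isUnit_iff_ne_zero.2 (by rwa [← hχ])
    have hNi : E a * (E a)⁻¹ = 1 := Matrix.mul_nonsing_inv _ hu
    have hsurjb : ∀ i : Fin m, ∃ w, T A a w = (bV i : A.Elt → K) := by
      intro i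
      refine ⟨∑ j, (E a)⁻¹ j i • (bV j : A.Elt → K), ?_⟩
      calc T A a (∑ j, (E a)⁻¹ j i • (bV j : A.Elt → K))
          = ∑ j, (E a)⁻¹ j i • T A a (bV j : A.Elt → K) := by
            rw [map_sum]; exact Finset.sum_congr rfl fun j _ => by rw [map_smul]
        _ = ∑ j, (E a)⁻¹ j i • ∑ l, E a l j • (bV l : A.Elt → K) :=
            Finset.sum_congr rfl fun j _ => by rw [hT]
        _ = ∑ j, ∑ l, (E a l j * (E a)⁻¹ j i) • (bV l : A.Elt → K) := by
            refine Finset.sum_congr rfl fun j _ => ?_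
            rw [Finset.smul_sum]
            exact Finset.sum_congr rfl fun l _ => by rw [smul_smul, mul_comm]
        _ = ∑ l, ∑ j, (E a l j * (E a)⁻¹ j i) • (bV l : A.Elt → K) := Finset.sum_comm
        _ = ∑ l, (1 : Matrix (Fin m) (Fin m) K) l i • (bV l : A.Elt → K) := by
            refine Finset.sum_congr rfl fun l _ => ?_
            rw [← Finset.sum_smul, ← Matrix.mul_apply, hNi]
        _ = (bV i : A.Elt → K) := by simp [Matrix.one_apply, ite_smul]
    have hinj2 : ∀ x y : A.Elt, a * x = a * y → x = y := by
      intro x y hxy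
      have hfun : ∀ i : Fin m, (bV i : A.Elt → K) x = (bV i : A.Elt → K) y := by
        intro i
        obtain ⟨w, hw⟩ := hsurjb i
        rw [← hw]
        show w (a * x) = w (a * y)
        rw [hxy]
      apply Subtype.ext; funext i
      have h1 := hCoord (Phi A (X i)) (phi_X_mem_V A i)
      have h2 : Phi A (X i) x = Phi A (X i) y := by
        rw [h1, Finset.sum_apply, Finset.sum_apply]
        refine Finset.sum_congr rfl fun l _ => ?_
        simp only [Pi.smul_apply, hfun l]
      simpa using h2
    obtain ⟨S, hS⟩ := A.carrier_closed
    have hzl : MvPolynomial.zeroLocus K (Ideal.span S) = A.carrier := by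
      ext x
      simp only [MvPolynomial.mem_zeroLocus_iff]
      constructor
      · intro h
        rw [hS]
        exact fun p hp => h p (Ideal.subset_span hp)
      · intro hx p hp
        rw [hS] at hx
        have hle : Ideal.span S ≤ RingHom.ker (MvPolynomial.eval x) :=
          Ideal.span_le.2 fun p hp => RingHom.mem_ker.2 (hx p hp)
        exact RingHom.mem_ker.1 (hle hp)
    set pa : Fin A.n → MvPolynomial (Fin A.n) K :=
      fun i => bind₁ (Sum.elim (fun j => MvPolynomial.C (a.1 j)) MvPolynomial.X) (mulP i)
      with hpadef
    have hpa : ∀ (v : Fin A.n → K) (i : Fin A.n), MvPolynomial.eval v (pa i) = A.mul a.1 v i := by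
      intro v i
      rw [hmulP, hpadef]
      rw [eval_bind1]
      have hfn : (fun s => MvPolynomial.eval v (Sum.elim (fun j => MvPolynomial.C (a.1 j)) MvPolynomial.X s))
          = Sum.elim a.1 v := funext fun s => by cases s <;> simp
      rw [hfn]
    have hmaps : (MvPolynomial.zeroLocus K (Ideal.span S)).MapsTo
        (fun v i => MvPolynomial.eval v (pa i)) (MvPolynomial.zeroLocus K (Ideal.span S)) := by
      intro v hv
      rw [hzl] at hv ⊢
      show (fun i => MvPolynomial.eval v (pa i)) ∈ A.carrier
      rw [funext fun i => hpa v i]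
      exact A.mul_mem a.2 hv
    have hinjOn : (MvPolynomial.zeroLocus K (Ideal.span S)).InjOn
        (fun v i => MvPolynomial.eval v (pa i)) := by
      intro v hv w hw h
      rw [hzl] at hv hw
      have h1 : A.mul a.1 v = A.mul a.1 w := by
        funext i
        rw [← hpa v i, ← hpa w i]
        exact congrFun h i
      exact congrArg Subtype.val (hinj2 ⟨v, hv⟩ ⟨w, hw⟩ (Subtype.ext h1))
    have hsurj := ax_grothendieck_zeroLocus (Ideal.span S) pa hmaps hinjOn
    have hone : A.one ∈ MvPolynomial.zeroLocus K (Ideal.span S) := by rw [hzl]; exact A.one_mem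
    obtain ⟨w, hw, hwe⟩ := hsurj hone
    rw [hzl] at hw
    let bb : A.Elt := ⟨w, hw⟩
    have hab : a * bb = 1 := by
      apply Subtype.ext
      show A.mul a.1 w = A.one
      rw [← funext fun i => hpa w i]
      exact hwe
    have hba : bb * a = 1 := by
      apply hinj2
      rw [← mul_assoc, hab, one_mul, mul_one]
    exact ⟨⟨a, bb, hab, hba⟩, rfl⟩
  let P : Fin A.n → MvPolynomial (Fin A.n) K := fun i0 =>
    ∑ j, ∑ l, MvPolynomial.C (Coord j (Phi A (X i0)) * (bV l : A.Elt → K) 1) * gMat.adjugate l j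
  have hPdef : ∀ i0, P i0 =
      ∑ j, ∑ l, MvPolynomial.C (Coord j (Phi A (X i0)) * (bV l : A.Elt → K) 1) * gMat.adjugate l j :=
    fun _ => rfl
  refine ⟨χ, 1, P, ?_, ?_⟩
  · ext a
    simp only [Set.mem_setOf_eq]
    constructor
    · rintro ⟨u, rfl⟩
      exact unit_det u
    · exact det_unit a
  · intro u i0
    set a : A.Elt := (u : A.Elt) with hadef
    set b : A.Elt := ((u⁻¹ : (A.Elt)ˣ) : A.Elt) with hbdef
    have hab : a * b = 1 := u.mul_inv
    have hba : b * a = 1 := u.inv_mul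
    have hEab : E a * E b = 1 := by rw [← hEmul b a, hba, hEone]
    have hadjmat : gMat.adjugate.map (MvPolynomial.eval a.1) = (E a).adjugate := by
      have h := RingHom.map_adjugate (MvPolynomial.eval a.1 : MvPolynomial (Fin A.n) K →+* K) gMat
      simpa [RingHom.mapMatrix_apply] using h
    have hadj : (E a).adjugate = (E a).det • E b := by
      calc (E a).adjugate = (E a).adjugate * (E a * E b) := by rw [hEab, Matrix.mul_one]
        _ = ((E a).adjugate * E a) * E b := by rw [Matrix.mul_assoc]
        _ = ((E a).det • (1 : Matrix (Fin m) (Fin m) K)) * E b := by rw [Matrix.adjugate_mul]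
        _ = (E a).det • E b := by rw [Matrix.smul_mul, Matrix.one_mul]
    have hadj2 : ∀ l j, MvPolynomial.eval a.1 (gMat.adjugate l j)
        = MvPolynomial.eval a.1 χ * E b l j := by
      intro l j
      have h2 : (gMat.adjugate.map (MvPolynomial.eval a.1)) l j = (E a).adjugate l j := by
        rw [hadjmat]
      rw [Matrix.map_apply] at h2
      rw [h2, hadj, Matrix.smul_apply, smul_eq_mul, hχ]
    have hb0 : b.1 i0 = ∑ j, Coord j (Phi A (X i0)) * (bV j : A.Elt → K) b := by
      have h0 : b.1 i0 = Phi A (X i0) b := by simp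
      rw [h0]
      conv_lhs => rw [hCoord (Phi A (X i0)) (phi_X_mem_V A i0)]
      rw [Finset.sum_apply]
      exact Finset.sum_congr rfl fun j _ => by rw [Pi.smul_apply, smul_eq_mul]
    have hbj : ∀ j, (bV j : A.Elt → K) b = ∑ l, E b l j * (bV l : A.Elt → K) 1 := by
      intro j
      have h1 : (bV j : A.Elt → K) b = T A b (bV j : A.Elt → K) (1 : A.Elt) := by
        show _ = (bV j : A.Elt → K) (b * 1)
        rw [mul_one]
      rw [h1, hT b j, Finset.sum_apply]
      exact Finset.sum_congr rfl fun l _ => by rw [Pi.smul_apply, smul_eq_mul]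
    have hPev : MvPolynomial.eval a.1 (P i0) = ∑ j, ∑ l,
        Coord j (Phi A (X i0)) * (bV l : A.Elt → K) 1
          * MvPolynomial.eval a.1 (gMat.adjugate l j) := by
      rw [hPdef, map_sum]
      refine Finset.sum_congr rfl fun j _ => ?_
      rw [map_sum]
      refine Finset.sum_congr rfl fun l _ => ?_
      rw [map_mul, eval_C]
    show b.1 i0 * MvPolynomial.eval a.1 χ ^ 1 = MvPolynomial.eval a.1 (P i0)
    rw [pow_one, hPev, hb0]
    calc (∑ j, Coord j (Phi A (X i0)) * (bV j : A.Elt → K) b) * MvPolynomial.eval a.1 χ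
        = ∑ j, Coord j (Phi A (X i0)) * (∑ l, E b l j * (bV l : A.Elt → K) 1)
            * MvPolynomial.eval a.1 χ := by
          rw [Finset.sum_mul]
          exact Finset.sum_congr rfl fun j _ => by rw [hbj]
      _ = ∑ j, ∑ l, Coord j (Phi A (X i0)) * (bV l : A.Elt → K) 1
            * (MvPolynomial.eval a.1 χ * E b l j) := by
          refine Finset.sum_congr rfl fun j _ => ?_
          rw [Finset.mul_sum, Finset.sum_mul]
          exact Finset.sum_congr rfl fun l _ => by ring
      _ = ∑ j, ∑ l, Coord j (Phi A (X i0)) * (bV l : A.Elt → K) 1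
            * MvPolynomial.eval a.1 (gMat.adjugate l j) :=
          Finset.sum_congr rfl fun j _ => Finset.sum_congr rfl fun l _ => by rw [hadj2]
end

section
/- Let $R$ be a commutative semilocal ring (a ring with finitely many maximal ideals), $A$ a connected commutative algebraic ring over an algebraically closed field $K$, and $f : R \to A$ a homomorphism of abstract rings such that $f(R)$ is Zariski-dense in $A$. Then $f(R^{\times})$ is Zariski-dense in $A$. -/
open MvPolynomial Set

section PolyCont

variable {K : Type} [Field K] {n : ℕ}

lemma eval_bind1 (x : Fin n → K) {σ : Type} (g : σ → MvPolynomial (Fin n) K)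
    (φ : MvPolynomial σ K) :
    eval x (bind₁ g φ) = eval (fun i => eval x (g i)) φ :=
  eval₂Hom_bind₁ _ _ _ _

lemma affineZariski_continuous (g : (Fin n → K) → (Fin n → K))
    (Q : Fin n → MvPolynomial (Fin n) K) (hg : ∀ x i, g x i = eval x (Q i)) :
    @Continuous _ _ (affineZariski K n) (affineZariski K n) g := by
  letI := affineZariski K n
  rw [show affineZariski K n = TopologicalSpace.generateFrom
    {U | ∃ p : MvPolynomial (Fin n) K, U = {x | eval x p ≠ 0}} from rfl]
  refine continuous_generateFrom_iff.mpr ?_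
  rintro s ⟨p, rfl⟩
  have key : g ⁻¹' {x | eval x p ≠ 0} = {x | eval x (bind₁ Q p) ≠ 0} := by
    ext x
    have hfun : g x = fun i => eval x (Q i) := funext fun i => hg x i
    simp only [mem_preimage, mem_setOf_eq, eval_bind1, hfun]
  rw [key]
  exact TopologicalSpace.isOpen_generateFrom_of_mem ⟨_, rfl⟩

end PolyCont

section EltCont

variable {K : Type} [Field K] (A : CommAlgebraicRing K)

lemma elt_cont_of_poly (g : A.Elt → A.Elt) (G : (Fin A.n → K) → (Fin A.n → K))
    (hG : @Continuous _ _ (affineZariski K A.n) (affineZariski K A.n) G)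
    (hcomm : ∀ x : A.Elt, (g x).1 = G x.1) : Continuous g := by
  letI := affineZariski K A.n
  refine continuous_induced_rng.mpr ?_
  have heq : ((fun x : A.Elt => x.1) ∘ g) = G ∘ (fun x : A.Elt => x.1) :=
    funext fun x => hcomm x
  rw [heq]
  exact hG.comp continuous_induced_dom

lemma elt_cont_add (a : A.Elt) : Continuous (fun x : A.Elt => a + x) := by
  obtain ⟨P, hP⟩ := A.add_poly
  refine elt_cont_of_poly A _ (fun y => A.add a.1 y) ?_ (fun x => rfl)
  refine affineZariski_continuous _
    (fun i => bind₁ (Sum.elim (fun j => C (a.1 j)) X) (P i)) ?_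
  intro y i
  have h2 : Sum.elim (a.1 : Fin A.n → K) y
      = fun s => eval y (Sum.elim (fun j => C (a.1 j)) X s) := by
    funext s; cases s <;> simp
  rw [hP, eval_bind1, h2]

lemma elt_cont_mul (a : A.Elt) : Continuous (fun x : A.Elt => a * x) := by
  obtain ⟨P, hP⟩ := A.mul_poly
  refine elt_cont_of_poly A _ (fun y => A.mul a.1 y) ?_ (fun x => rfl)
  refine affineZariski_continuous _
    (fun i => bind₁ (Sum.elim (fun j => C (a.1 j)) X) (P i)) ?_
  intro y i
  have h2 : Sum.elim (a.1 : Fin A.n → K) y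
      = fun s => eval y (Sum.elim (fun j => C (a.1 j)) X s) := by
    funext s; cases s <;> simp
  rw [hP, eval_bind1, h2]

lemma elt_cont_neg : Continuous (fun x : A.Elt => -x) := by
  obtain ⟨P, hP⟩ := A.neg_poly
  refine elt_cont_of_poly A _ (fun y => A.neg y) ?_ (fun x => rfl)
  exact affineZariski_continuous _ P (fun y i => hP y i)

end EltCont

section Abstract

open Set

variable {α : Type} [CommRing α] [TopologicalSpace α]

/-- Translation homeomorphism from one-sided continuity of addition. -/
def tAdd (hadd : ∀ a : α, Continuous fun x => a + x) (a : α) : α ≃ₜ α where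
  toEquiv := ⟨fun x => a + x, fun x => -a + x,
    fun x => neg_add_cancel_left a x, fun x => add_neg_cancel_left a x⟩
  continuous_toFun := hadd a
  continuous_invFun := hadd (-a)

lemma tAdd_apply (hadd : ∀ a : α, Continuous fun x => a + x) (a x : α) :
    tAdd hadd a x = a + x := rfl

/-- Negation homeomorphism. -/
def tNeg (hneg : Continuous fun x : α => -x) : α ≃ₜ α where
  toEquiv := Equiv.neg α
  continuous_toFun := by simpa using hneg
  continuous_invFun := by simpa using hneg

lemma closure_neg_mem (hneg : Continuous fun x : α => -x) (s : Set α)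
    (hnegs : ∀ x ∈ s, -x ∈ s) {x : α} (hx : x ∈ closure s) : -x ∈ closure s := by
  have h1 : -x ∈ (tNeg hneg) '' closure s := ⟨x, hx, rfl⟩
  rw [Homeomorph.image_closure] at h1
  refine closure_mono ?_ h1
  rintro _ ⟨y, hy, rfl⟩
  exact hnegs y hy

lemma closure_add_mem (hadd : ∀ a : α, Continuous fun x => a + x) (s : Set α)
    (hadds : ∀ x ∈ s, ∀ y ∈ s, x + y ∈ s) {x y : α}
    (hx : x ∈ closure s) (hy : y ∈ closure s) : x + y ∈ closure s := by
  have step1 : ∀ g ∈ s, ∀ z ∈ closure s, g + z ∈ closure s := by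
    intro g hg z hz
    have h1 : g + z ∈ (tAdd hadd g) '' closure s := ⟨z, hz, rfl⟩
    rw [Homeomorph.image_closure] at h1
    have h2' : (⇑(tAdd hadd g)) '' s ⊆ s := by
      rintro _ ⟨w, hw, rfl⟩
      exact hadds g hg w hw
    exact closure_mono h2' h1
  have h1 : y + x ∈ (tAdd hadd y) '' closure s := ⟨x, hx, rfl⟩
  rw [Homeomorph.image_closure] at h1
  have h2 : (⇑(tAdd hadd y)) '' s ⊆ closure s := by
    rintro _ ⟨w, hw, rfl⟩
    show y + w ∈ closure s
    rw [add_comm]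
    exact step1 w hw y hy
  have h3 : y + x ∈ closure s := by
    have := closure_mono h2 h1
    rwa [closure_closure] at this
  rwa [add_comm]

lemma closure_subgroup_univ [ConnectedSpace α]
    (hadd : ∀ a : α, Continuous fun x => a + x) (hneg : Continuous fun x : α => -x)
    (s : Set α) (h0 : (0 : α) ∈ s)
    (hadds : ∀ x ∈ s, ∀ y ∈ s, x + y ∈ s) (hnegs : ∀ x ∈ s, -x ∈ s)
    (hint : (interior (closure s)).Nonempty) : closure s = univ := by
  obtain ⟨z, hz⟩ := hint
  have hzC : z ∈ closure s := interior_subset hz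
  have hopen : IsOpen (closure s) := by
    rw [isOpen_iff_forall_mem_open]
    intro b hb
    refine ⟨(tAdd hadd (b + -z)) '' interior (closure s), ?_, ?_, ?_⟩
    · rintro _ ⟨v, hv, rfl⟩
      have hbz : b + -z ∈ closure s :=
        closure_add_mem hadd s hadds hb (closure_neg_mem hneg s hnegs hzC)
      exact closure_add_mem hadd s hadds hbz (interior_subset hv)
    · exact (Homeomorph.isOpen_image _).mpr isOpen_interior
    · exact ⟨z, hz, by rw [tAdd_apply]; abel⟩
  exact IsClopen.eq_univ ⟨isClosed_closure, hopen⟩ ⟨0, subset_closure h0⟩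

lemma closure_mul_ideal (hmul : ∀ a : α, Continuous fun x => a * x)
    {R : Type} [CommRing R] (f : R →+* α) (I I' : Ideal R)
    (h1 : (1 : α) ∈ closure (f '' (I' : Set R))) :
    closure (f '' (I : Set R)) ⊆ closure (f '' ((I * I' : Ideal R) : Set R)) := by
  refine closure_minimal ?_ isClosed_closure
  rintro _ ⟨x, hx, rfl⟩
  have h2 : f x * 1 ∈ (fun y => f x * y) '' closure (f '' (I' : Set R)) := ⟨1, h1, rfl⟩
  have h3 := image_closure_subset_closure_image (hmul (f x)) h2
  rw [mul_one] at h3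
  refine closure_mono ?_ h3
  rintro _ ⟨_, ⟨y, hy, rfl⟩, rfl⟩
  exact ⟨x * y, Ideal.mul_mem_mul hx hy, map_mul f x y⟩

lemma open_diff_finite_closed {X : Type*} [TopologicalSpace X] (S : Set (Set X))
    (hfin : S.Finite) (hS : ∀ s ∈ S, IsClosed s ∧ interior s = ∅) :
    ∀ U : Set X, IsOpen U → U.Nonempty →
      IsOpen (U \ ⋃₀ S) ∧ (U \ ⋃₀ S).Nonempty := by
  revert hS
  refine Set.Finite.induction_on (motive := fun S _ => (∀ s ∈ S, IsClosed s ∧ interior s = ∅) →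
    ∀ U : Set X, IsOpen U → U.Nonempty → IsOpen (U \ ⋃₀ S) ∧ (U \ ⋃₀ S).Nonempty) S hfin ?_ ?_
  · intro _ U hU hne
    simpa using ⟨hU, hne⟩
  · intro a S ha hSfin ih hS U hU hne
    have hcl := (hS a (mem_insert _ _)).1
    have hint := (hS a (mem_insert _ _)).2
    have hUa : IsOpen (U \ a) := hU.sdiff hcl
    have hUane : (U \ a).Nonempty := by
      rw [Set.nonempty_iff_ne_empty]
      intro hemp
      have hsub : U ⊆ a := by rwa [Set.diff_eq_empty] at hemp
      have : U ⊆ interior a := hU.subset_interior_iff.mpr hsub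
      rw [hint] at this
      exact hne.ne_empty (Set.subset_empty_iff.mp this)
    obtain ⟨hop, hne'⟩ := ih (fun s hs => hS s (mem_insert_of_mem _ hs)) (U \ a) hUa hUane
    rw [Set.sUnion_insert, ← Set.diff_diff]
    exact ⟨hop, hne'⟩

end Abstract


/-- If `R` is a commutative semilocal ring, `A` a connected commutative
algebraic ring over an algebraically closed field `K`, and `f : R → A` an abstract ring
homomorphism with Zariski-dense image, then `f(Rˣ)` is Zariski-dense in `A`. -/
theorem stmt_4 (K : Type) [Field K] [IsAlgClosed K] (R : Type) [CommRing R]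
    (hsemilocal : {I : Ideal R | I.IsMaximal}.Finite)
    (A : CommAlgebraicRing K) [ConnectedSpace A.Elt]
    (f : R →+* A.Elt) (hdense : Dense (Set.range f)) :
    Dense (f '' {r : R | IsUnit r}) := by
  classical
  have hadd : ∀ a : A.Elt, Continuous fun x => a + x := elt_cont_add A
  have hneg : Continuous fun x : A.Elt => -x := elt_cont_neg A
  have hmul : ∀ a : A.Elt, Continuous fun x => a * x := elt_cont_mul A
  rw [dense_iff_inter_open]
  intro U hU hUne
  -- the "bad" maximal ideals: those whose image is not dense
  set Bad : Set (Ideal R) := {m | m.IsMaximal ∧ closure (f '' (m : Set R)) ≠ Set.univ}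
    with hBadDef
  have hBadfin : Bad.Finite := hsemilocal.subset fun m hm => hm.1
  have hBadcl : ∀ m ∈ Bad, IsClosed (closure (f '' (m : Set R))) ∧
      interior (closure (f '' (m : Set R))) = ∅ := by
    intro m hm
    refine ⟨isClosed_closure, ?_⟩
    by_contra hi
    refine hm.2 (closure_subgroup_univ hadd hneg (f '' (m : Set R))
      ⟨0, m.zero_mem, map_zero f⟩ ?_ ?_ (Set.nonempty_iff_ne_empty.mpr hi))
    · rintro _ ⟨x, hx, rfl⟩ _ ⟨y, hy, rfl⟩
      exact ⟨x + y, m.add_mem hx hy, map_add f x y⟩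
    · rintro _ ⟨x, hx, rfl⟩
      exact ⟨-x, m.neg_mem hx, map_neg f x⟩
  -- shrink U away from the bad closures
  set SB : Set (Set A.Elt) := (fun m : Ideal R => closure (f '' (m : Set R))) '' Bad
    with hSBDef
  obtain ⟨hVopen, hVne⟩ := open_diff_finite_closed SB (hBadfin.image _)
    (by rintro _ ⟨m, hm, rfl⟩; exact hBadcl m hm) U hU hUne
  set V : Set A.Elt := U \ ⋃₀ SB with hVDef
  -- find r in R with f r ∈ V
  obtain ⟨_, hmemV, r, rfl⟩ := dense_iff_inter_open.mp hdense V hVopen hVne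
  -- every maximal ideal containing r has dense image
  have hgood : ∀ m : Ideal R, m.IsMaximal → r ∈ m →
      closure (f '' (m : Set R)) = Set.univ := by
    intro m hm hrm
    by_contra hne
    exact hmemV.2 ⟨closure (f '' (m : Set R)), ⟨m, ⟨hm, hne⟩, rfl⟩,
      subset_closure ⟨r, hrm, rfl⟩⟩
  -- σ : the maximal ideals containing r
  set σ : Set (Ideal R) := {m | m.IsMaximal ∧ r ∈ m} with hσDef
  have hσfin : σ.Finite := hsemilocal.subset fun m hm => hm.1
  set σF : Finset (Ideal R) := hσfin.toFinset with hσFDef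
  -- q : intersection of the maximal ideals avoiding r
  set q : Ideal R := sInf {m | m.IsMaximal ∧ r ∉ m} with hqDef
  -- CRT : for each maximal ideal avoiding r, a witness w ∈ m' with w ≡ 1 mod σ
  have hcop : ∀ m' : Ideal R, m'.IsMaximal → r ∉ m' →
      ∃ w ∈ m', ∀ m ∈ σ, w - 1 ∈ m := by
    intro m' hm' hrm'
    set Iσ : Ideal R := σF.inf id with hIσDef
    have hIσle : ∀ m ∈ σ, Iσ ≤ m := fun m hm =>
      Finset.inf_le (hσfin.mem_toFinset.mpr hm)
    have htop : Iσ ⊔ m' = ⊤ := by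
      by_contra hne
      have hmle : m' = Iσ ⊔ m' := hm'.eq_of_le hne le_sup_right
      have hIle : Iσ ≤ m' := by rw [hmle]; exact le_sup_left
      obtain ⟨m, hmF, hle⟩ := (Ideal.IsPrime.inf_le' hm'.isPrime).mp hIle
      have hmσ : m ∈ σ := hσfin.mem_toFinset.mp hmF
      have : m = m' := hmσ.1.eq_of_le hm'.ne_top hle
      exact hrm' (this ▸ hmσ.2)
    have h1mem : (1 : R) ∈ Iσ ⊔ m' := by rw [htop]; trivial
    obtain ⟨y, hy, z, hz, hyz⟩ := Submodule.mem_sup.mp h1mem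
    refine ⟨z, hz, fun m hm => ?_⟩
    have : z - 1 = -y := by rw [← hyz]; ring
    rw [this]
    exact m.neg_mem (hIσle m hm hy)
  -- the element c
  set τ : Set (Ideal R) := {m | m.IsMaximal ∧ r ∉ m} with hτDef
  have hτfin : τ.Finite := hsemilocal.subset fun m hm => hm.1
  set wsel : Ideal R → R := fun m' =>
    if h : m'.IsMaximal ∧ r ∉ m' then (hcop m' h.1 h.2).choose else 1 with hwselDef
  have hwsel1 : ∀ m' ∈ τ, wsel m' ∈ m' := by
    intro m' hm'
    rw [hwselDef]
    simp only [dif_pos (show m'.IsMaximal ∧ r ∉ m' from hm')]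
    exact (hcop m' hm'.1 hm'.2).choose_spec.1
  have hwsel2 : ∀ m' ∈ τ, ∀ m ∈ σ, wsel m' - 1 ∈ m := by
    intro m' hm' m hm
    rw [hwselDef]
    simp only [dif_pos (show m'.IsMaximal ∧ r ∉ m' from hm')]
    exact (hcop m' hm'.1 hm'.2).choose_spec.2 m hm
  set c : R := ∏ m' ∈ hτfin.toFinset, wsel m' with hcDef
  have hc1 : ∀ m' ∈ τ, c ∈ m' := by
    intro m' hm'
    obtain ⟨k, hk⟩ := Finset.dvd_prod_of_mem wsel (hτfin.mem_toFinset.mpr hm')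
    rw [hcDef, hk]
    exact Ideal.mul_mem_right _ _ (hwsel1 m' hm')
  have hc2 : ∀ m ∈ σ, c - 1 ∈ m := by
    intro m hm
    have : Ideal.Quotient.mk m c = Ideal.Quotient.mk m 1 := by
      rw [hcDef, map_prod, map_one]
      refine Finset.prod_eq_one fun m' hm' => ?_
      have := hwsel2 m' (hτfin.mem_toFinset.mp hm') m hm
      have h1 : Ideal.Quotient.mk m (wsel m') = Ideal.Quotient.mk m 1 :=
        Ideal.Quotient.eq.mpr this
      rw [h1, map_one]
    exact Ideal.Quotient.eq.mp this
  have hcq : c ∈ q := Submodule.mem_sInf.mpr fun m' hm' => hc1 m' hm'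
  -- the ideal J₀
  have hJ : ∀ s : Finset (Ideal R),
      (∀ m ∈ s, (1 : A.Elt) ∈ closure (f '' (m : Set R))) →
      ∃ J₀ : Ideal R, J₀ ≤ q ∧ (∀ m ∈ s, J₀ ≤ m) ∧
        closure (f '' (q : Set R)) ⊆ closure (f '' (J₀ : Set R)) := by
    intro s
    induction s using Finset.induction_on with
    | empty => exact fun _ => ⟨q, le_rfl, by simp, subset_rfl⟩
    | @insert a s ha ih =>
      intro h1
      obtain ⟨J₀, hJq, hms, hcl⟩ := ih fun m hm => h1 m (Finset.mem_insert_of_mem hm)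
      refine ⟨J₀ * a, Ideal.mul_le_left.trans hJq, ?_, hcl.trans
        (closure_mul_ideal hmul f J₀ a (h1 a (Finset.mem_insert_self _ _)))⟩
      intro m hm
      rcases Finset.mem_insert.mp hm with h | h
      · rw [h]; exact Ideal.mul_le_right
      · exact Ideal.mul_le_left.trans (hms m h)
  obtain ⟨J₀, hJq, hms, hcl⟩ := hJ σF (by
    intro m hm
    have hmσ : m ∈ σ := hσfin.mem_toFinset.mp hm
    rw [hgood m hmσ.1 hmσ.2]
    trivial)
  -- the open set V'
  set V' : Set A.Elt := (fun y => f r + f c + y) ⁻¹' U with hV'Def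
  have hV'open : IsOpen V' := hU.preimage (hadd (f r + f c))
  have hmemV' : f (-c) ∈ V' := by
    show f r + f c + f (-c) ∈ U
    rw [map_neg, add_neg_cancel_right]
    exact hmemV.1
  have hcls : f (-c) ∈ closure (f '' (J₀ : Set R)) :=
    hcl (subset_closure ⟨-c, q.neg_mem hcq, rfl⟩)
  obtain ⟨x, hxV', t, htJ, rfl⟩ :
      ∃ x ∈ V', ∃ t ∈ (J₀ : Set R), f t = x := by
    obtain ⟨x, hx1, hx2⟩ := mem_closure_iff.mp hcls V' hV'open hmemV'
    obtain ⟨t, ht, rfl⟩ := hx2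
    exact ⟨f t, hx1, t, ht, rfl⟩
  -- the unit u
  set u : R := r + c + t with huDef
  have hu_unit : IsUnit u := by
    by_contra hnu
    obtain ⟨M, hM, hle⟩ := Ideal.exists_le_maximal (Ideal.span {u})
      (by rwa [Ne, Ideal.span_singleton_eq_top])
    have huM : u ∈ M := hle (Ideal.mem_span_singleton_self u)
    by_cases hrM : r ∈ M
    · have hMσ : M ∈ σ := ⟨hM, hrM⟩
      have htM : t ∈ M := hms M (hσfin.mem_toFinset.mpr hMσ) htJ
      have hu1 : u - 1 ∈ M := by
        have heq : u - 1 = r + (c - 1) + t := by rw [huDef]; ring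
        rw [heq]
        exact M.add_mem (M.add_mem hrM (hc2 M hMσ)) htM
      have h1M : (1 : R) ∈ M := by
        have := M.sub_mem huM hu1
        simpa using this
      exact hM.ne_top ((Ideal.eq_top_iff_one M).mpr h1M)
    · have hqM : q ≤ M := sInf_le ⟨hM, hrM⟩
      have heq : r = u - c - t := by rw [huDef]; ring
      exact hrM (heq ▸ M.sub_mem (M.sub_mem huM (hqM hcq)) (hqM (hJq htJ)))
  refine ⟨f u, ?_, u, hu_unit, rfl⟩
  show f u ∈ U
  have : f u = f r + f c + f t := by rw [huDef, map_add, map_add]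
  rw [this]
  exact hxV'
end

section
/- Let $A$ be a commutative algebraic ring over an algebraically closed field $K$. Then $A$ is semilocal as an abstract ring, i.e., $A$ has only finitely many maximal ideals. Moreover, every maximal ideal of $A$ is Zariski-closed. -/
noncomputable section
open MvPolynomial TopologicalSpace

namespace StmtAux

variable {K : Type} [Field K] {n : ℕ}

lemma az_isOpen_basic (p : MvPolynomial (Fin n) K) :
    @IsOpen _ (affineZariski K n) {x | eval x p ≠ 0} :=
  TopologicalSpace.GenerateOpen.basic _ ⟨p, rfl⟩

lemma az_isClosed_zeroSet (T : Set (MvPolynomial (Fin n) K)) :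
    @IsClosed _ (affineZariski K n) {x | ∀ p ∈ T, eval x p = 0} := by
  letI := affineZariski K n
  have h : {x : Fin n → K | ∀ p ∈ T, eval x p = 0} = (⋃ p ∈ T, {x | eval x p ≠ 0})ᶜ := by
    ext x; simp
  rw [h]
  exact (isOpen_biUnion fun p _ => az_isOpen_basic p).isClosed_compl

lemma az_basis :
    @IsTopologicalBasis (Fin n → K) (affineZariski K n)
      {U | ∃ p : MvPolynomial (Fin n) K, U = {x | eval x p ≠ 0}} := by
  letI := affineZariski K n
  refine ⟨?_, ?_, rfl⟩
  · rintro U ⟨p, rfl⟩ V ⟨q, rfl⟩ x hx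
    refine ⟨{y | eval y (p * q) ≠ 0}, ⟨p * q, rfl⟩, ?_, ?_⟩
    · simp only [Set.mem_inter_iff, Set.mem_setOf_eq] at hx
      simp [mul_ne_zero_iff, hx.1, hx.2]
    · intro y hy
      simp only [Set.mem_setOf_eq, map_mul, mul_ne_zero_iff] at hy
      exact ⟨hy.1, hy.2⟩
  · apply Set.eq_univ_of_univ_subset
    intro x _
    exact Set.mem_sUnion.2 ⟨{y | eval y (1 : MvPolynomial (Fin n) K) ≠ 0}, ⟨1, rfl⟩, by simp⟩

lemma az_closed_eq_zeroLocus {S : Set (Fin n → K)} (hS : @IsClosed _ (affineZariski K n) S) :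
    zeroLocus K (vanishingIdeal K S) = S := by
  letI := affineZariski K n
  refine Set.Subset.antisymm ?_ (zeroLocus_vanishingIdeal_le S)
  intro x hx
  by_contra hxS
  obtain ⟨V, ⟨q, rfl⟩, hxV, hVS⟩ :=
    az_basis.exists_subset_of_mem_open (Set.mem_compl hxS) hS.isOpen_compl
  have hq : q ∈ vanishingIdeal K S := by
    intro y hy
    by_contra h0
    exact (hVS h0) hy
  exact hxV (hx q hq)

lemma az_closed_strict {S T : Set (Fin n → K)} (hS : @IsClosed _ (affineZariski K n) S)
    (hT : @IsClosed _ (affineZariski K n) T) (hST : S ⊂ T) :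
    vanishingIdeal K T < vanishingIdeal K S := by
  refine lt_of_le_of_ne (vanishingIdeal_anti_mono hST.1) fun h => hST.2 ?_
  rw [← az_closed_eq_zeroLocus hT, ← az_closed_eq_zeroLocus hS, h]

/-- No strictly-descending well-founded issues: `⊂` on closed sets is well-founded. -/
lemma az_wf :
    WellFounded (fun S T : Set (Fin n → K) =>
      (@IsClosed _ (affineZariski K n) S ∧ @IsClosed _ (affineZariski K n) T) ∧ S ⊂ T) := by
  have hwf : WellFounded ((· > ·) : Ideal (MvPolynomial (Fin n) K) → _ → Prop) :=
    (IsNoetherian.wellFoundedGT (inferInstance : IsNoetherianRing (MvPolynomial (Fin n) K))).wf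
  refine Subrelation.wf (r := InvImage (· > ·) (fun S => vanishingIdeal K S)) ?_
    (InvImage.wf _ hwf)
  rintro S T ⟨⟨hS, hT⟩, hST⟩
  exact az_closed_strict hS hT hST

lemma az_singleton_closed (a : Fin n → K) :
    @IsClosed _ (affineZariski K n) {a} := by
  have h : ({a} : Set (Fin n → K))
      = {x | ∀ p ∈ (Set.range fun i => (X i - C (a i) : MvPolynomial (Fin n) K)), eval x p = 0} := by
    ext x
    simp only [Set.mem_singleton_iff, Set.mem_setOf_eq, Set.forall_mem_range, map_sub, eval_X,
      eval_C, sub_eq_zero]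
    exact ⟨fun h => by subst h; exact fun i => rfl, fun h => funext h⟩
  rw [h]
  exact az_isClosed_zeroSet _

/-- continuity of polynomial maps -/
lemma az_continuous_poly (F : Fin n → MvPolynomial (Fin n) K) :
    @Continuous _ _ (affineZariski K n) (affineZariski K n) (fun x i => eval x (F i)) := by
  letI := affineZariski K n
  refine continuous_generateFrom_iff.2 ?_
  rintro s ⟨p, rfl⟩
  have h : (fun (x : Fin n → K) i => eval x (F i)) ⁻¹' {x | eval x p ≠ 0}
      = {x | eval x (bind₁ F p) ≠ 0} := by
    ext x
    have key : eval x (bind₁ F p) = eval (fun i => eval x (F i)) p :=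
      eval₂Hom_bind₁ (RingHom.id K) x F p
    simp only [Set.mem_preimage, Set.mem_setOf_eq, key]
  rw [h]
  exact az_isOpen_basic _

section EltLemmas

variable {K : Type} [Field K]

lemma carrier_isClosed (A : CommAlgebraicRing K) :
    @IsClosed _ (affineZariski K A.n) A.carrier := by
  obtain ⟨T, hT⟩ := A.carrier_closed
  rw [hT]
  exact az_isClosed_zeroSet T

lemma image_val_closed (A : CommAlgebraicRing K) {S : Set A.Elt} (h : IsClosed S) :
    @IsClosed _ (affineZariski K A.n) ((fun x : A.Elt => x.1) '' S) := by
  letI := affineZariski K A.n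
  rw [isClosed_induced_iff] at h
  obtain ⟨C, hC, rfl⟩ := h
  have himg : (fun x : A.Elt => x.1) '' ((fun x : A.Elt => x.1) ⁻¹' C)
      = C ∩ A.carrier := by
    rw [Set.image_preimage_eq_inter_range]
    congr 1
    exact Subtype.range_val
  rw [himg]
  exact @IsClosed.inter _ _ _ (affineZariski K A.n) hC (carrier_isClosed A)

lemma isClosed_singleton_zero (A : CommAlgebraicRing K) :
    IsClosed ({0} : Set A.Elt) := by
  letI := affineZariski K A.n
  rw [isClosed_induced_iff]
  refine ⟨{A.zero}, az_singleton_closed A.zero, ?_⟩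
  ext x
  simp only [Set.mem_preimage, Set.mem_singleton_iff]
  exact ⟨fun h => Subtype.ext h, fun h => congrArg Subtype.val h⟩

lemma wf_elt (A : CommAlgebraicRing K) :
    WellFounded (fun S T : Set A.Elt => (IsClosed S ∧ IsClosed T) ∧ S ⊂ T) := by
  refine Subrelation.wf
    (r := InvImage (fun S T : Set (Fin A.n → K) =>
      (@IsClosed _ (affineZariski K A.n) S ∧ @IsClosed _ (affineZariski K A.n) T) ∧ S ⊂ T)
      (fun S => (fun x : A.Elt => x.1) '' S)) ?_ (InvImage.wf _ az_wf)
  rintro S T ⟨⟨hS, hT⟩, hST⟩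
  refine ⟨⟨image_val_closed A hS, image_val_closed A hT⟩, ?_⟩
  constructor
  · exact Set.image_mono hST.1
  · intro hsub
    apply hST.2
    intro x hx
    obtain ⟨y, hy, hyx⟩ := hsub ⟨x, hx, rfl⟩
    rwa [show y = x from Subtype.ext hyx] at hy

lemma continuous_mul_left (A : CommAlgebraicRing K) (a : A.Elt) :
    Continuous (fun x : A.Elt => a * x) := by
  letI := affineZariski K A.n
  obtain ⟨P, hP⟩ := A.mul_poly
  set G : Fin A.n → MvPolynomial (Fin A.n) K :=
    fun i => bind₁ (Sum.elim (fun j => C (a.1 j)) X) (P i) with hG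
  have key : ∀ v : Fin A.n → K, (fun i => eval v (G i)) = A.mul a.1 v := by
    intro v; funext i
    rw [hP]
    have h1 : eval v (G i)
        = eval (fun s => eval v (Sum.elim (fun j => C (a.1 j)) X s)) (P i) :=
      eval₂Hom_bind₁ (RingHom.id K) v _ (P i)
    rw [h1]
    have h2 : (fun s => eval v (Sum.elim (fun j => C (a.1 j)) X s)) = Sum.elim (a.1 : Fin A.n → K) v := by
      funext s; cases s <;> simp
    rw [h2]
  rw [continuous_induced_rng]
  have heq : ((fun x : A.Elt => x.1) ∘ (fun x : A.Elt => a * x))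
      = (fun v (i : Fin A.n) => eval v (G i)) ∘ (fun x : A.Elt => x.1) := by
    funext x
    show A.mul a.1 x.1 = _
    rw [Function.comp_apply, key x.1]
  rw [heq]
  exact (az_continuous_poly G).comp continuous_induced_dom

lemma continuous_add_left (A : CommAlgebraicRing K) (a : A.Elt) :
    Continuous (fun x : A.Elt => a + x) := by
  letI := affineZariski K A.n
  obtain ⟨P, hP⟩ := A.add_poly
  set G : Fin A.n → MvPolynomial (Fin A.n) K :=
    fun i => bind₁ (Sum.elim (fun j => C (a.1 j)) X) (P i) with hG
  have key : ∀ v : Fin A.n → K, (fun i => eval v (G i)) = A.add a.1 v := by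
    intro v; funext i
    rw [hP]
    have h1 : eval v (G i)
        = eval (fun s => eval v (Sum.elim (fun j => C (a.1 j)) X s)) (P i) :=
      eval₂Hom_bind₁ (RingHom.id K) v _ (P i)
    rw [h1]
    have h2 : (fun s => eval v (Sum.elim (fun j => C (a.1 j)) X s)) = Sum.elim (a.1 : Fin A.n → K) v := by
      funext s; cases s <;> simp
    rw [h2]
  rw [continuous_induced_rng]
  have heq : ((fun x : A.Elt => x.1) ∘ (fun x : A.Elt => a + x))
      = (fun v (i : Fin A.n) => eval v (G i)) ∘ (fun x : A.Elt => x.1) := by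
    funext x
    show A.add a.1 x.1 = _
    rw [Function.comp_apply, key x.1]
  rw [heq]
  exact (az_continuous_poly G).comp continuous_induced_dom

lemma isUnit_of_regular [IsAlgClosed K] (A : CommAlgebraicRing K) (a : A.Elt)
    (h : ∀ y : A.Elt, a * y = 0 → y = 0) : IsUnit a := by
  obtain ⟨T, hT⟩ := A.carrier_closed
  have hzl : MvPolynomial.zeroLocus K (Ideal.span T) = A.carrier := by
    ext x
    constructor
    · intro hx
      rw [hT]
      exact fun p hp => hx p (Ideal.subset_span hp)
    · intro hx p hp
      have hsub : T ⊆ (RingHom.ker (eval x) : Ideal (MvPolynomial (Fin A.n) K)) := by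
        intro q hq
        rw [SetLike.mem_coe, RingHom.mem_ker]
        rw [hT] at hx
        exact hx q hq
      exact (Ideal.span_le.mpr hsub) hp
  obtain ⟨P, hP⟩ := A.mul_poly
  set G : Fin A.n → MvPolynomial (Fin A.n) K :=
    fun i => bind₁ (Sum.elim (fun j => C (a.1 j)) X) (P i) with hG
  have key : ∀ v : Fin A.n → K, (fun i => eval v (G i)) = A.mul a.1 v := by
    intro v; funext i
    rw [hP]
    have h1 : eval v (G i)
        = eval (fun s => eval v (Sum.elim (fun j => C (a.1 j)) X s)) (P i) :=
      eval₂Hom_bind₁ (RingHom.id K) v _ (P i)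
    rw [h1]
    have h2 : (fun s => eval v (Sum.elim (fun j => C (a.1 j)) X s)) = Sum.elim (a.1 : Fin A.n → K) v := by
      funext s; cases s <;> simp
    rw [h2]
  have maps : Set.MapsTo (fun v i => eval v (G i))
      (MvPolynomial.zeroLocus K (Ideal.span T)) (MvPolynomial.zeroLocus K (Ideal.span T)) := by
    intro v hv
    rw [hzl] at hv ⊢
    show (fun i => eval v (G i)) ∈ A.carrier
    rw [key v]
    exact A.mul_mem a.2 hv
  have inj : Set.InjOn (fun v i => eval v (G i))
      (MvPolynomial.zeroLocus K (Ideal.span T)) := by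
    intro u hu v hv huv
    rw [hzl] at hu hv
    have h1 : A.mul a.1 u = A.mul a.1 v := by
      rw [← key u, ← key v]; exact huv
    let U : A.Elt := ⟨u, hu⟩
    let V : A.Elt := ⟨v, hv⟩
    have h2 : a * U = a * V := by
      apply Subtype.ext
      show A.mul a.1 u = A.mul a.1 v
      exact h1
    have h3 : a * (U - V) = 0 := by rw [mul_sub, h2, sub_self]
    have h4 := h _ h3
    rw [sub_eq_zero] at h4
    exact congrArg Subtype.val h4
  have surj := ax_grothendieck_zeroLocus (Ideal.span T) G maps inj
  have h1 : (1 : A.Elt).1 ∈ MvPolynomial.zeroLocus K (Ideal.span T) := by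
    rw [hzl]; exact A.one_mem
  obtain ⟨w, hw, hweq⟩ := surj h1
  have hw' : w ∈ A.carrier := by rwa [hzl] at hw
  refine IsUnit.of_mul_eq_one (a := a) ⟨w, hw'⟩ (Subtype.ext ?_)
  show A.mul a.1 w = A.one
  rw [← key w]
  exact hweq

end EltLemmas

section Main

variable {K : Type} [Field K] (A : CommAlgebraicRing K)

/-- annihilator of a single element -/
def ann (y : A.Elt) : Set A.Elt := {x : A.Elt | x * y = 0}

/-- annihilator of a set -/
def AnnS (S : Set A.Elt) : Set A.Elt := {x : A.Elt | ∀ s ∈ S, x * s = 0}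

lemma ann_isClosed (y : A.Elt) : IsClosed (ann A y) := by
  have h : ann A y = (fun x : A.Elt => y * x) ⁻¹' {0} := by
    ext x
    simp only [ann, Set.mem_setOf_eq, Set.mem_preimage, Set.mem_singleton_iff, mul_comm]
  rw [h]
  exact (isClosed_singleton_zero A).preimage (continuous_mul_left A y)

lemma AnnS_isClosed (S : Set A.Elt) : IsClosed (AnnS A S) := by
  have h : AnnS A S = ⋂ s ∈ S, ann A s := by
    ext x; simp [AnnS, ann]
  rw [h]
  exact isClosed_biInter fun s _ => ann_isClosed A s

lemma AnnS_antitone {S T : Set A.Elt} (h : S ⊆ T) : AnnS A T ⊆ AnnS A S :=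
  fun _ hx s hs => hx s (h hs)

lemma subset_AnnS_AnnS (S : Set A.Elt) : S ⊆ AnnS A (AnnS A S) :=
  fun s hs x hx => by rw [mul_comm]; exact hx s hs

lemma AnnS_AnnS_AnnS (S : Set A.Elt) : AnnS A (AnnS A (AnnS A S)) = AnnS A S :=
  Set.Subset.antisymm (AnnS_antitone A (subset_AnnS_AnnS A S)) (subset_AnnS_AnnS A (AnnS A S))

lemma ann_eq_AnnS (y : A.Elt) : ann A y = AnnS A {y} := by
  ext x; simp [ann, AnnS]

/-- every nonzero annihilator target extends to a maximal one -/
lemma exists_maximal_ann (y : A.Elt) (hy : y ≠ 0) :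
    ∃ z : A.Elt, z ≠ 0 ∧ ann A y ⊆ ann A z ∧
      ∀ w : A.Elt, w ≠ 0 → ann A z ⊆ ann A w → ann A z = ann A w := by
  set s : Set (Set A.Elt) :=
    {D | ∃ z : A.Elt, z ≠ 0 ∧ ann A y ⊆ ann A z ∧ D = AnnS A (ann A z)} with hs
  obtain ⟨D, hD, hmin⟩ := (wf_elt A).has_min s ⟨_, y, hy, subset_rfl, rfl⟩
  obtain ⟨z, hz, hyz, rfl⟩ := hD
  refine ⟨z, hz, hyz, fun w hw hzw => ?_⟩
  have hmem : AnnS A (ann A w) ∈ s := ⟨w, hw, hyz.trans hzw, rfl⟩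
  have hsub : AnnS A (ann A w) ⊆ AnnS A (ann A z) := AnnS_antitone A hzw
  have hnot := hmin _ hmem
  have heq : AnnS A (ann A w) = AnnS A (ann A z) := by
    by_contra hne
    exact hnot ⟨⟨AnnS_isClosed A _, AnnS_isClosed A _⟩, hsub, fun h => hne
      (Set.Subset.antisymm hsub h)⟩
  have h1 : ann A z = AnnS A (AnnS A (ann A z)) := by
    rw [ann_eq_AnnS, AnnS_AnnS_AnnS]
  have h2 : ann A w = AnnS A (AnnS A (ann A w)) := by
    rw [ann_eq_AnnS, AnnS_AnnS_AnnS]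
  rw [h1, h2, heq]

/-- maximal annihilators are prime (as sets) -/
lemma max_ann_prime (z : A.Elt) (hz : z ≠ 0)
    (hmax : ∀ w : A.Elt, w ≠ 0 → ann A z ⊆ ann A w → ann A z = ann A w)
    (a b : A.Elt) (hab : a * b ∈ ann A z) : a ∈ ann A z ∨ b ∈ ann A z := by
  by_cases ha : a ∈ ann A z
  · exact Or.inl ha
  right
  have haz : a * z ≠ 0 := ha
  have hsub : ann A z ⊆ ann A (a * z) := by
    intro x hx
    show x * (a * z) = 0
    calc x * (a * z) = a * (x * z) := by ring
    _ = 0 := by rw [show x * z = 0 from hx, mul_zero]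
  have heq := hmax (a * z) haz hsub
  have hb : b ∈ ann A (a * z) := by
    show b * (a * z) = 0
    calc b * (a * z) = (a * b) * z := by ring
    _ = 0 := hab
  rw [heq]
  exact hb

/-- the set of maximal annihilators -/
def MaxAnn : Set (Set A.Elt) :=
  {P | ∃ z : A.Elt, z ≠ 0 ∧ P = ann A z ∧
    ∀ w : A.Elt, w ≠ 0 → ann A z ⊆ ann A w → ann A z = ann A w}

lemma MaxAnn_finite : (MaxAnn A).Finite := by
  by_contra hinf
  have hinf' : Set.Infinite _ := hinf
  obtain e := hinf'.natEmbedding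
  have hsel : ∀ k : ℕ, ∃ z : A.Elt, z ≠ 0 ∧ (e k).1 = ann A z ∧
      ∀ w : A.Elt, w ≠ 0 → ann A z ⊆ ann A w → ann A z = ann A w := fun k => (e k).2
  choose z hz hz2 hz3 using hsel
  -- the intersections
  let E : ℕ → Set A.Elt := fun k => Nat.rec (ann A (z 0))
    (fun k Ek => Ek ∩ ann A (z (k + 1))) k
  have hE0 : E 0 = ann A (z 0) := rfl
  have hEsucc : ∀ k, E (k + 1) = E k ∩ ann A (z (k + 1)) := fun k => rfl
  have hEclosed : ∀ k, IsClosed (E k) := by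
    intro k
    induction k with
    | zero => exact ann_isClosed A _
    | succ k ih => rw [hEsucc]; exact ih.inter (ann_isClosed A _)
  have hEabsorb : ∀ k (x b : A.Elt), x ∈ E k → x * b ∈ E k := by
    intro k
    induction k with
    | zero =>
      intro x b hx
      show (x * b) * z 0 = 0
      calc (x * b) * z 0 = b * (x * z 0) := by ring
      _ = 0 := by rw [show x * z 0 = 0 from hx, mul_zero]
    | succ k ih =>
      intro x b hx
      rw [hEsucc] at hx ⊢
      refine ⟨ih x b hx.1, ?_⟩
      show (x * b) * z (k + 1) = 0
      calc (x * b) * z (k + 1) = b * (x * z (k + 1)) := by ring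
      _ = 0 := by rw [show x * z (k + 1) = 0 from hx.2, mul_zero]
  -- prime avoidance
  have havoid : ∀ (P : Set A.Elt), (∀ a b : A.Elt, a * b ∈ P → a ∈ P ∨ b ∈ P) →
      ∀ k, E k ⊆ P → ∃ i ≤ k, ann A (z i) ⊆ P := by
    intro P hP k
    induction k with
    | zero => intro h; exact ⟨0, le_refl 0, h⟩
    | succ k ih =>
      intro h
      rcases em (E k ⊆ P) with h1 | h1
      · obtain ⟨i, hik, hi⟩ := ih h1
        exact ⟨i, hik.trans (Nat.le_succ k), hi⟩
      by_cases h2 : ann A (z (k + 1)) ⊆ P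
      · exact ⟨k + 1, le_refl _, h2⟩
      obtain ⟨a, ha, haP⟩ := Set.not_subset.1 h1
      obtain ⟨b, hb, hbP⟩ := Set.not_subset.1 h2
      have hab : a * b ∈ E (k + 1) := by
        rw [hEsucc]
        refine ⟨hEabsorb k a b ha, ?_⟩
        show (a * b) * z (k + 1) = 0
        calc (a * b) * z (k + 1) = a * (b * z (k + 1)) := by ring
        _ = 0 := by rw [show b * z (k + 1) = 0 from hb, mul_zero]
      rcases hP a b (h hab) with h' | h'
      · exact absurd h' haP
      · exact absurd h' hbP
  -- strict descent
  have hstrict : ∀ k, E (k + 1) ⊂ E k := by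
    intro k
    rw [hEsucc]
    refine ⟨Set.inter_subset_left, fun hsub => ?_⟩
    have h : E k ⊆ ann A (z (k + 1)) :=
      fun x hx => (hsub hx).2
    obtain ⟨i, hik, hi⟩ := havoid (ann A (z (k + 1)))
      (max_ann_prime A _ (hz (k + 1)) (hz3 (k + 1))) k h
    have heq : ann A (z i) = ann A (z (k + 1)) := hz3 i (z (k + 1)) (hz (k + 1)) hi
    have : e i = e (k + 1) := Subtype.ext (by rw [hz2 i, hz2 (k + 1), heq])
    have := e.injective this
    omega
  obtain ⟨D, ⟨k, rfl⟩, hmin⟩ := (wf_elt A).has_min (Set.range E) ⟨E 0, 0, rfl⟩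
  exact hmin (E (k + 1)) ⟨k + 1, rfl⟩ ⟨⟨hEclosed (k + 1), hEclosed k⟩, hstrict k⟩

variable [IsAlgClosed K]

lemma maximalIdeal_isClosed (m : Ideal A.Elt) (hm : m.IsMaximal) :
    IsClosed (m : Set A.Elt) := by
  -- the union of all maximal annihilators
  set F : Set A.Elt := ⋃₀ MaxAnn A with hF
  have hFclosed : IsClosed F := by
    have hF2 : F = ⋃ P ∈ MaxAnn A, P := by rw [hF, Set.sUnion_eq_biUnion]
    rw [hF2]
    refine Set.Finite.isClosed_biUnion (MaxAnn_finite A) ?_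
    rintro P ⟨zP, -, rfl, -⟩
    exact ann_isClosed A zP
  have hmF : (m : Set A.Elt) ⊆ F := by
    intro x hx
    have hnu : ¬ IsUnit x := fun hu => hm.ne_top (Ideal.eq_top_of_isUnit_mem m hx hu)
    have hann : ∃ y : A.Elt, y ≠ 0 ∧ x * y = 0 := by
      by_contra hc
      push_neg at hc
      exact hnu (isUnit_of_regular A x fun y hy => by
        by_contra h0
        exact (hc y h0) hy)
    obtain ⟨y, hy, hxy⟩ := hann
    obtain ⟨zz, hzz, hsub, hmax⟩ := exists_maximal_ann A y hy
    exact Set.mem_sUnion.2 ⟨ann A zz, ⟨zz, hzz, rfl, hmax⟩, hsub hxy⟩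
  have h1F : (1 : A.Elt) ∉ F := by
    rintro ⟨P, ⟨zP, hzP, rfl, -⟩, h1⟩
    exact hzP (by simpa [ann] using h1)
  -- the closure of m is an ideal
  set cl : Set A.Elt := closure (m : Set A.Elt) with hcl
  have hclF : cl ⊆ F := closure_minimal hmF hFclosed
  have hsmul : ∀ (c : A.Elt) {x : A.Elt}, x ∈ cl → c * x ∈ cl := by
    intro c x hx
    have himg := image_closure_subset_closure_image (s := (m : Set A.Elt))
      (continuous_mul_left A c)
    have h2 : (fun x : A.Elt => c * x) '' (m : Set A.Elt) ⊆ (m : Set A.Elt) := by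
      rintro - ⟨w, hw, rfl⟩
      exact Ideal.mul_mem_left m c hw
    exact closure_mono h2 (himg ⟨x, hx, rfl⟩)
  have hadd : ∀ {x y : A.Elt}, x ∈ cl → y ∈ cl → x + y ∈ cl := by
    have step1 : ∀ b ∈ (m : Set A.Elt), ∀ c ∈ cl, b + c ∈ cl := by
      intro b hb c hc
      have himg := image_closure_subset_closure_image (s := (m : Set A.Elt))
        (continuous_add_left A b)
      have h2 : (fun x : A.Elt => b + x) '' (m : Set A.Elt) ⊆ (m : Set A.Elt) := by
        rintro - ⟨w, hw, rfl⟩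
        exact Ideal.add_mem m hb hw
      exact closure_mono h2 (himg ⟨c, hc, rfl⟩)
    intro x y hx hy
    have hTclosed : IsClosed ((fun t : A.Elt => x + t) ⁻¹' cl) :=
      isClosed_closure.preimage (continuous_add_left A x)
    have hmT : (m : Set A.Elt) ⊆ (fun t : A.Elt => x + t) ⁻¹' cl := by
      intro b hb
      show x + b ∈ cl
      rw [add_comm]
      exact step1 b hb x hx
    exact closure_minimal hmT hTclosed hy
  let I' : Ideal A.Elt :=
    { carrier := cl
      add_mem' := hadd
      zero_mem' := subset_closure m.zero_mem
      smul_mem' := fun c x hx => by simpa [smul_eq_mul] using hsmul c hx }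
  have hne : I' ≠ ⊤ := by
    intro h
    have h1 : (1 : A.Elt) ∈ I' := by rw [h]; trivial
    exact h1F (hclF h1)
  have hle : m ≤ I' := fun x hx => subset_closure hx
  have heq : m = I' := hm.eq_of_le hne hle
  have hset : (m : Set A.Elt) = cl := by rw [heq]; rfl
  rw [hset]
  exact isClosed_closure

lemma maximals_finite : {I : Ideal A.Elt | I.IsMaximal}.Finite := by
  by_contra hinf
  have hinf' : Set.Infinite _ := hinf
  obtain e := hinf'.natEmbedding
  have hm : ∀ k : ℕ, ((e k).1 : Ideal A.Elt).IsMaximal := fun k => (e k).2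
  let J : ℕ → Ideal A.Elt := fun k => Nat.rec (e 0).1 (fun k Jk => Jk ⊓ (e (k + 1)).1) k
  have hJsucc : ∀ k, J (k + 1) = J k ⊓ (e (k + 1)).1 := fun k => rfl
  have hJclosed : ∀ k, IsClosed ((SetLike.coe (J k))) := by
    intro k
    induction k with
    | zero => exact maximalIdeal_isClosed A _ (hm 0)
    | succ k ih =>
      rw [hJsucc, Submodule.coe_inf]
      exact ih.inter (maximalIdeal_isClosed A _ (hm (k + 1)))
  have havoid : ∀ (P : Ideal A.Elt), P.IsPrime → ∀ k, J k ≤ P → ∃ i ≤ k, (e i).1 ≤ P := by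
    intro P hP k
    induction k with
    | zero => exact fun h => ⟨0, le_refl _, h⟩
    | succ k ih =>
      intro h
      rw [hJsucc] at h
      rcases (Ideal.IsPrime.inf_le hP).1 h with h' | h'
      · obtain ⟨i, hik, hi⟩ := ih h'
        exact ⟨i, hik.trans (Nat.le_succ k), hi⟩
      · exact ⟨k + 1, le_refl _, h'⟩
  have hstrict : ∀ k, (SetLike.coe (J (k + 1))) ⊂ (SetLike.coe (J k)) := by
    intro k
    constructor
    · rw [hJsucc, Submodule.coe_inf]
      exact Set.inter_subset_left
    · intro hsub
      have hle : J k ≤ (e (k + 1)).1 := by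
        intro x hx
        have h1 : x ∈ (SetLike.coe (J (k + 1))) := hsub hx
        rw [hJsucc] at h1
        exact (Submodule.mem_inf.1 h1).2
      obtain ⟨i, hik, hi⟩ := havoid _ (hm (k + 1)).isPrime k hle
      have heq := (hm i).eq_of_le (hm (k + 1)).ne_top hi
      have := e.injective (Subtype.ext heq)
      omega
  obtain ⟨D, ⟨k, rfl⟩, hmin⟩ :=
    (wf_elt A).has_min (Set.range (fun k => (SetLike.coe (J k)))) ⟨(SetLike.coe (J 0)), 0, rfl⟩
  exact hmin ((SetLike.coe (J (k + 1)))) ⟨k + 1, rfl⟩ ⟨⟨hJclosed (k + 1), hJclosed k⟩, hstrict k⟩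

end Main

end StmtAux

end

/-- A commutative algebraic ring over an algebraically closed field is
semilocal as an abstract ring (it has only finitely many maximal ideals), and every
maximal ideal is Zariski-closed. -/
theorem stmt_5 (K : Type) [Field K] [IsAlgClosed K] (A : CommAlgebraicRing K) :
    {I : Ideal A.Elt | I.IsMaximal}.Finite ∧
      ∀ I : Ideal A.Elt, I.IsMaximal → IsClosed (I : Set A.Elt) :=
  ⟨StmtAux.maximals_finite A, fun I hI => StmtAux.maximalIdeal_isClosed A I hI⟩
end

section
/- Let $f : R \to A$ be an abstract ring homomorphism from an infinite field $R$ into a commutative algebraic ring $A$ over an algebraically closed field $K$, such that $f(R)$ is Zariski-dense in $A$. Then $A$ is connected. -/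
section StmtTenAux

open Topology TopologicalSpace MvPolynomial

variable {K : Type} [Field K]

/-- The point of the prime spectrum corresponding to a point of affine space. -/
noncomputable def zarPoint {n : ℕ} (x : Fin n → K) : PrimeSpectrum (MvPolynomial (Fin n) K) :=
  ⟨RingHom.ker (eval x), RingHom.ker_isPrime _⟩

lemma affineZariski_eq_induced (n : ℕ) :
    affineZariski K n = TopologicalSpace.induced zarPoint inferInstance := by
  conv_rhs => rw [(PrimeSpectrum.isTopologicalBasis_basic_opens
    (R := MvPolynomial (Fin n) K)).eq_generateFrom]
  rw [induced_generateFrom_eq, affineZariski]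
  congr 1
  ext U
  constructor
  · rintro ⟨p, rfl⟩
    refine ⟨_, ⟨p, rfl⟩, ?_⟩
    ext x
    simp [zarPoint, PrimeSpectrum.mem_basicOpen, RingHom.mem_ker]
  · rintro ⟨_, ⟨p, rfl⟩, rfl⟩
    refine ⟨p, ?_⟩
    ext x
    simp [zarPoint, PrimeSpectrum.mem_basicOpen, RingHom.mem_ker]

lemma zar_noetherian (n : ℕ) : @NoetherianSpace (Fin n → K) (affineZariski K n) := by
  letI : TopologicalSpace (Fin n → K) := affineZariski K n
  have hind : IsInducing (zarPoint (K := K) (n := n)) := ⟨affineZariski_eq_induced n⟩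
  exact hind.noetherianSpace

lemma eval_bind₁' {σ τ : Type} (x : τ → K) (g : σ → MvPolynomial τ K) (p : MvPolynomial σ K) :
    eval x (bind₁ g p) = eval (fun i => eval x (g i)) p :=
  eval₂Hom_bind₁ _ _ _ _

lemma zar_continuous_of_poly {n m : ℕ} (g : (Fin n → K) → (Fin m → K))
    (P : Fin m → MvPolynomial (Fin n) K) (hg : ∀ x i, g x i = eval x (P i)) :
    Continuous[affineZariski K n, affineZariski K m] g := by
  letI t1 : TopologicalSpace (Fin n → K) := affineZariski K n
  show Continuous[t1, TopologicalSpace.generateFrom _] g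
  refine continuous_generateFrom_iff.mpr ?_
  rintro U ⟨p, rfl⟩
  have hpre : g ⁻¹' {x | eval x p ≠ 0} = {x | eval x (bind₁ P p) ≠ 0} := by
    ext x
    have hx : g x = fun i => eval x (P i) := funext fun i => hg x i
    have : eval (g x) p = eval x (bind₁ P p) := by
      rw [eval_bind₁', hx]
    simp [Set.mem_preimage, this]
  rw [hpre]
  exact TopologicalSpace.isOpen_generateFrom_of_mem ⟨bind₁ P p, rfl⟩

variable (A : CommAlgebraicRing K)

lemma elt_continuous_of_poly (h : A.Elt → A.Elt) (P : Fin A.n → MvPolynomial (Fin A.n) K)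
    (hP : ∀ (x : A.Elt) (i : Fin A.n), (h x).1 i = eval x.1 (P i)) : Continuous h := by
  letI t : TopologicalSpace (Fin A.n → K) := affineZariski K A.n
  have hval : IsInducing (fun x : A.Elt => x.1) := ⟨rfl⟩
  rw [hval.continuous_iff]
  have : (fun x : A.Elt => x.1) ∘ h =
      (fun y : Fin A.n → K => fun i => eval y (P i)) ∘ (fun x : A.Elt => x.1) := by
    funext x
    exact funext fun i => hP x i
  rw [this]
  exact (zar_continuous_of_poly _ P (fun _ _ => rfl)).comp hval.continuous

lemma elt_continuous_add_left (b : A.Elt) : Continuous (fun x : A.Elt => b + x) := by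
  obtain ⟨P, hP⟩ := A.add_poly
  refine elt_continuous_of_poly A _
    (fun i => bind₁ (Sum.elim (fun j => C (b.1 j)) X) (P i)) ?_
  intro x i
  rw [eval_bind₁']
  have : (fun v => eval x.1 (Sum.elim (fun j => C (b.1 j)) X v)) = Sum.elim b.1 x.1 := by
    funext v
    cases v with
    | inl j => simp
    | inr j => simp
  rw [this]
  exact hP b.1 x.1 i

lemma elt_continuous_mul_left (b : A.Elt) : Continuous (fun x : A.Elt => b * x) := by
  obtain ⟨P, hP⟩ := A.mul_poly
  refine elt_continuous_of_poly A _
    (fun i => bind₁ (Sum.elim (fun j => C (b.1 j)) X) (P i)) ?_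
  intro x i
  rw [eval_bind₁']
  have : (fun v => eval x.1 (Sum.elim (fun j => C (b.1 j)) X v)) = Sum.elim b.1 x.1 := by
    funext v
    cases v with
    | inl j => simp
    | inr j => simp
  rw [this]
  exact hP b.1 x.1 i

lemma elt_noetherian : NoetherianSpace A.Elt := by
  letI t : TopologicalSpace (Fin A.n → K) := affineZariski K A.n
  haveI : NoetherianSpace (Fin A.n → K) := zar_noetherian A.n
  have hval : IsInducing (fun x : A.Elt => x.1) := ⟨rfl⟩
  exact hval.noetherianSpace

end StmtTenAux


/-- If `f : R → A` is an abstract ring homomorphism from an infinite field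
into a commutative algebraic ring over an algebraically closed field and `f(R)` is
Zariski-dense in `A`, then `A` is connected. -/
theorem stmt_10 (K : Type) [Field K] [IsAlgClosed K] (R : Type) [Field R] [Infinite R]
    (A : CommAlgebraicRing K) (f : R →+* A.Elt) (hdense : Dense (Set.range f)) :
    ConnectedSpace A.Elt := by
  classical
  haveI : TopologicalSpace.NoetherianSpace A.Elt := elt_noetherian A
  set C : Set A.Elt := connectedComponent (0 : A.Elt) with hCdef
  have hC0 : (0 : A.Elt) ∈ C := mem_connectedComponent
  -- C is closed under addition of its elements
  have haddC : ∀ a ∈ C, ∀ x ∈ C, a + x ∈ C := by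
    intro a ha x hx
    have himg : IsPreconnected ((fun y : A.Elt => a + y) '' C) :=
      isPreconnected_connectedComponent.image _ (elt_continuous_add_left A a).continuousOn
    have hmem : a ∈ (fun y : A.Elt => a + y) '' C := ⟨0, hC0, by simp⟩
    have hsub := himg.subset_connectedComponent hmem
    have hcc : connectedComponent a = connectedComponent (0 : A.Elt) :=
      (connectedComponent_eq ha).symm
    show a + x ∈ connectedComponent (0 : A.Elt)
    rw [← hcc]
    exact hsub ⟨x, hx, rfl⟩
  have hmulC : ∀ (a : A.Elt), ∀ x ∈ C, a * x ∈ C := by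
    intro a x hx
    have himg : IsPreconnected ((fun y : A.Elt => a * y) '' C) :=
      isPreconnected_connectedComponent.image _ (elt_continuous_mul_left A a).continuousOn
    have hmem : (0 : A.Elt) ∈ (fun y : A.Elt => a * y) '' C := ⟨0, hC0, by simp⟩
    exact himg.subset_connectedComponent hmem ⟨x, hx, rfl⟩
  -- the ideal with carrier C
  let I : Ideal A.Elt :=
    { carrier := C
      add_mem' := fun {a b} ha hb => haddC a ha b hb
      zero_mem' := hC0
      smul_mem' := fun c x hx => by simpa [smul_eq_mul] using hmulC c x hx }
  have hmemI : ∀ x : A.Elt, x ∈ I ↔ x ∈ C := fun x => Iff.rfl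
  -- finitely many connected components
  haveI hfinc : Finite (ConnectedComponents A.Elt) := by
    haveI := (TopologicalSpace.NoetherianSpace.finite_irreducibleComponents (α := A.Elt)).to_subtype
    refine Finite.of_surjective
      (fun s : irreducibleComponents A.Elt => ConnectedComponents.mk s.2.1.1.some) ?_
    intro z
    obtain ⟨y, rfl⟩ := ConnectedComponents.surjective_coe z
    refine ⟨⟨irreducibleComponent y, irreducibleComponent_mem_irreducibleComponents y⟩, ?_⟩
    have hirr := irreducibleComponent_mem_irreducibleComponents y
    have hpre : IsPreconnected (irreducibleComponent y) := hirr.1.2.isPreconnected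
    have hsub := hpre.subset_connectedComponent (mem_irreducibleComponent (x := y))
    exact ConnectedComponents.coe_eq_coe'.mpr (hsub hirr.1.1.some_mem)
  -- C is open
  have hCopen : IsOpen C := by
    rw [← isClosed_compl_iff]
    have hcompl : Cᶜ = ⋃ w ∈ ({ConnectedComponents.mk (0 : A.Elt)}ᶜ : Set _),
        ConnectedComponents.mk ⁻¹' {w} := by
      ext x
      simp only [Set.mem_compl_iff, Set.mem_iUnion, Set.mem_preimage, Set.mem_singleton_iff,
        hCdef, exists_prop]
      constructor
      · intro hx
        refine ⟨ConnectedComponents.mk x, ?_, rfl⟩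
        exact fun h => hx (ConnectedComponents.coe_eq_coe'.mp h)
      · rintro ⟨w, hw, rfl⟩ hx
        exact hw (ConnectedComponents.coe_eq_coe'.mpr hx)
    rw [hcompl]
    refine Set.Finite.isClosed_biUnion (Set.toFinite _) ?_
    intro w _
    obtain ⟨y, rfl⟩ := ConnectedComponents.surjective_coe w
    rw [connectedComponents_preimage_singleton]
    exact isClosed_connectedComponent
  -- case split on the comap ideal in the field R
  rcases (I.comap f).eq_bot_or_top with hbot | htop
  · -- f⁻¹(C) = 0 : derive a contradiction with compactness and infiniteness of R
    exfalso
    haveI hQfin : Finite (A.Elt ⧸ I) := by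
      have hopen : ∀ z : A.Elt ⧸ I, IsOpen (Ideal.Quotient.mk I ⁻¹' {z}) := by
        intro z
        obtain ⟨a, rfl⟩ := Ideal.Quotient.mk_surjective z
        have hfib : Ideal.Quotient.mk I ⁻¹' {Ideal.Quotient.mk I a} =
            (fun x : A.Elt => (-a) + x) ⁻¹' C := by
          ext x
          simp only [Set.mem_preimage, Set.mem_singleton_iff]
          rw [Ideal.Quotient.eq]
          have : x - a = -a + x := by ring
          rw [this]
          exact Iff.rfl
        rw [hfib]
        exact hCopen.preimage (elt_continuous_add_left A (-a))
      have hcov : (Set.univ : Set A.Elt) ⊆ ⋃ z : A.Elt ⧸ I, Ideal.Quotient.mk I ⁻¹' {z} :=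
        fun x _ => Set.mem_iUnion.2 ⟨Ideal.Quotient.mk I x, rfl⟩
      obtain ⟨s, hs⟩ := isCompact_univ.elim_finite_subcover _ hopen hcov
      have hall : ∀ z : A.Elt ⧸ I, z ∈ s := by
        intro z
        obtain ⟨a, rfl⟩ := Ideal.Quotient.mk_surjective z
        have := hs (Set.mem_univ a)
        simp only [Set.mem_iUnion, Set.mem_preimage, Set.mem_singleton_iff, exists_prop] at this
        obtain ⟨w, hw, hqa⟩ := this
        exact hqa ▸ hw
      exact Finite.of_injective (fun z : A.Elt ⧸ I => (⟨z, hall z⟩ : {x // x ∈ s}))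
        (fun a b h => by simpa using congrArg Subtype.val h)
    have hinj : Function.Injective ((Ideal.Quotient.mk I).comp f) := by
      intro a b hab
      have h1 : Ideal.Quotient.mk I (f a) = Ideal.Quotient.mk I (f b) := hab
      have h2 : f a - f b ∈ I := Ideal.Quotient.eq.mp h1
      have h3 : f (a - b) ∈ I := by rwa [map_sub]
      have h4 : a - b ∈ I.comap f := h3
      rw [hbot] at h4
      have h5 : a - b = 0 := h4
      exact sub_eq_zero.mp h5
    haveI : Finite R := Finite.of_injective _ hinj
    exact not_finite R
  · -- f⁻¹(C) = R : C is everything, so the space is connected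
    have h1 : (1 : A.Elt) ∈ C := by
      have : (1 : R) ∈ I.comap f := htop ▸ Submodule.mem_top
      have hf1 : f 1 ∈ I := this
      rwa [map_one] at hf1
    have huniv : ∀ a : A.Elt, a ∈ C := by
      intro a
      have := hmulC a 1 h1
      rwa [mul_one] at this
    have hCuniv : connectedComponent (0 : A.Elt) = Set.univ :=
      Set.eq_univ_of_forall huniv
    exact connectedSpace_iff_connectedComponent.mpr ⟨0, hCuniv⟩
end

section
/- Let $K$ be an algebraically closed field of characteristic $p > 0$, and let $\tilde{A} = K \times K$ with componentwise addition and multiplication $\mu((x_1,y_1),(x_2,y_2)) = (x_1 x_2, x_1^p y_2 + x_2^p y_1)$. Then $\tilde{A}$ is a commutative algebraic ring with identity $(1,0)$, but $\tilde{A}$ is not isomorphic as an algebraic ring to any finite-dimensional $K$-algebra. -/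
open MvPolynomial TrivSqZeroExt

namespace Stmt13

variable {K : Type} [Field K]

lemma aeval_id_eq_eval {σ : Type*} (y : σ → K) (q : MvPolynomial σ K) :
    aeval y q = eval y q := by
  rw [← coe_aeval_eq_eval]; rfl

lemma aeval_aeval {σ τ : Type*} {A : Type*} [CommSemiring A] [Algebra K A]
    (x : τ → A) (s : σ → MvPolynomial τ K) (q : MvPolynomial σ K) :
    aeval x (aeval s q) = aeval (fun t => aeval x (s t)) q :=
  comp_aeval_apply (f := s) (aeval x) q

lemma eval_aeval {σ τ : Type*} (x : τ → K) (s : σ → MvPolynomial τ K) (q : MvPolynomial σ K) :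
    eval x (aeval s q) = eval (fun t => eval x (s t)) q := by
  rw [← aeval_id_eq_eval x, aeval_aeval]
  have h : (fun t => aeval x (s t)) = fun t => eval x (s t) :=
    funext fun t => aeval_id_eq_eval x (s t)
  rw [h, aeval_id_eq_eval]

lemma fst_aeval {σ : Type*} (y : σ → TrivSqZeroExt K K) (q : MvPolynomial σ K) :
    fst (aeval y q) = eval (fun j => fst (y j)) q := by
  rw [← aeval_id_eq_eval]
  exact comp_aeval_apply (f := y) (fstHom K K K) q

lemma inr_pow {p : ℕ} (hp : 2 ≤ p) (x : K) : (inr x : TrivSqZeroExt K K) ^ p = 0 := by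
  obtain ⟨q, rfl⟩ := Nat.exists_eq_add_of_le hp
  rw [pow_add, pow_two, inr_mul_inr]
  simp

lemma linear_sum {m : ℕ} (L : (Fin m → K) →ₗ[K] (Fin m → K)) (v : Fin m → K) (i : Fin m) :
    L v i = ∑ k, v k * L (Pi.single k 1) i := by
  have hv : v = ∑ k, v k • (Pi.single k (1 : K) : Fin m → K) := by
    funext j
    simp [Finset.sum_apply, Pi.single_apply, mul_ite]
  calc L v i = L (∑ k, v k • (Pi.single k (1 : K) : Fin m → K)) i := by rw [← hv]
    _ = ∑ k, v k * L (Pi.single k 1) i := by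
        rw [map_sum]
        simp [Finset.sum_apply]

end Stmt13

theorem stmt_13' (K : Type) [Field K] [IsAlgClosed K] (p : ℕ) [Fact p.Prime] [CharP K p]
    (tmul : K × K → K × K → K × K)
    (htmul : tmul = fun a b => (a.1 * b.1, a.1 ^ p * b.2 + b.1 ^ p * a.2)) :
      ¬ (∃ (m : ℕ) (mulS : (Fin m → K) →ₗ[K] (Fin m → K) →ₗ[K] (Fin m → K))
            (oneS : Fin m → K),
          (∀ x y z : Fin m → K, mulS (mulS x y) z = mulS x (mulS y z)) ∧
          (∀ x : Fin m → K, mulS oneS x = x) ∧ (∀ x : Fin m → K, mulS x oneS = x) ∧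
          ∃ φ : K × K → (Fin m → K), Function.Bijective φ ∧
            (∀ a b : K × K, φ (a + b) = φ a + φ b) ∧
            (∀ a b : K × K, φ (tmul a b) = mulS (φ a) (φ b)) ∧
            φ ((1 : K), (0 : K)) = oneS ∧
            (∃ P : Fin m → MvPolynomial (Fin 2) K,
              ∀ a : K × K, ∀ i, φ a i = MvPolynomial.eval ![a.1, a.2] (P i)) ∧
            (∃ Q : Fin 2 → MvPolynomial (Fin m) K, ∀ a : K × K,
              a.1 = MvPolynomial.eval (φ a) (Q 0) ∧
              a.2 = MvPolynomial.eval (φ a) (Q 1))) := by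
  subst htmul
  rintro ⟨m, mulS, oneS, -, -, honeR, φ, ⟨hinj, hsurj⟩, hadd, hmul, -, ⟨P, hP⟩, ⟨Q, hQ⟩⟩
  have hp2 : 2 ≤ p := (Fact.out (p := p.Prime)).two_le
  have hp0 : p ≠ 0 := by omega
  have hfin2 : ∀ x : Fin 2 → K, ![x 0, x 1] = x := by
    intro x; funext t; fin_cases t <;> rfl
  -- φ 0 = 0
  have hφ0 : φ 0 = 0 := by
    have h := hadd 0 0
    rw [add_zero] at h
    exact (left_eq_add.mp h)
  -- key pointwise identity
  have hA : ∀ b : K × K, φ (0, b.1 ^ p) = mulS (φ (0, 1)) (φ b) := by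
    intro b
    have h := hmul (0, 1) b
    simpa only [zero_mul, zero_pow hp0, zero_add, mul_one] using h
  -- vanishing of polys at 0
  have hP0 : ∀ k, eval (0 : Fin 2 → K) (P k) = 0 := by
    intro k
    have h := hP 0 k
    rw [hφ0] at h
    have h2 : ![(0 : K × K).1, (0 : K × K).2] = (0 : Fin 2 → K) := by
      funext t; fin_cases t <;> rfl
    rw [h2] at h
    exact h.symm
  have hQ0 : ∀ t : Fin 2, eval (0 : Fin m → K) (Q t) = 0 := by
    intro t
    have h := hQ 0
    rw [hφ0] at h
    fin_cases t
    · exact h.1.symm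
    · exact h.2.symm
  -- fst-vanishing at inr points
  have hfst0 : ∀ {n : ℕ} (w : Fin n → K) (q : MvPolynomial (Fin n) K),
      eval (0 : Fin n → K) q = 0 →
      aeval (fun j => (inr (w j) : TrivSqZeroExt K K)) q =
        inr (snd (aeval (fun j => (inr (w j) : TrivSqZeroExt K K)) q)) := by
    intro n w q h0
    have hf : fst (aeval (fun j => (inr (w j) : TrivSqZeroExt K K)) q) = 0 := by
      rw [Stmt13.fst_aeval]
      have h1 : (fun j => fst (inr (w j) : TrivSqZeroExt K K)) = (0 : Fin n → K) := by
        funext j; simp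
      rw [h1, h0]
    conv_lhs => rw [← inl_fst_add_inr_snd_eq
      (aeval (fun j => (inr (w j) : TrivSqZeroExt K K)) q)]
    rw [hf, inl_zero, zero_add]
  -- the matrix coefficients
  set S : Fin 2 → MvPolynomial (Fin 2) K := ![0, X 0 ^ p] with hS
  have hC : ∀ i, aeval S (P i) =
      ∑ k, MvPolynomial.C (mulS (φ (0, 1)) (Pi.single k 1) i) * P k := by
    intro i
    apply MvPolynomial.funext
    intro x
    rw [Stmt13.eval_aeval]
    have e2 : (fun t => eval x (S t)) = ![(0 : K), x 0 ^ p] := by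
      funext t; fin_cases t <;> simp [hS]
    rw [e2]
    have e3 : eval ![(0 : K), x 0 ^ p] (P i) = φ (0, x 0 ^ p) i := (hP (0, x 0 ^ p) i).symm
    rw [e3]
    have e4 := congrFun (hA (x 0, x 1)) i
    rw [e4, Stmt13.linear_sum]
    rw [map_sum]
    refine Finset.sum_congr rfl ?_
    intro k _
    rw [eval_mul, eval_C]
    have e5 : φ (x 0, x 1) k = eval x (P k) := by
      rw [hP (x 0, x 1) k, hfin2]
    rw [e5, mul_comm]
  -- the derivative of φ
  set Dφ : (Fin 2 → K) → Fin m → K :=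
    fun w k => snd (aeval (fun j => (inr (w j) : TrivSqZeroExt K K)) (P k)) with hDφ
  have hD : ∀ w, mulS (φ (0, 1)) (Dφ w) = 0 := by
    intro w
    funext i
    simp only [Pi.zero_apply]
    have h := congrArg (aeval (fun j => (inr (w j) : TrivSqZeroExt K K))) (hC i)
    rw [Stmt13.aeval_aeval] at h
    have e1 : (fun t => aeval (fun j => (inr (w j) : TrivSqZeroExt K K)) (S t)) =
        (0 : Fin 2 → TrivSqZeroExt K K) := by
      funext t
      fin_cases t
      · simp [hS]
      · show aeval (fun j => (inr (w j) : TrivSqZeroExt K K)) (X 0 ^ p) = 0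
        rw [map_pow, aeval_X]
        exact Stmt13.inr_pow hp2 (w 0)
    rw [e1, aeval_zero] at h
    have e2 : constantCoeff (P i) = 0 := by
      rw [← eval_zero]; exact hP0 i
    rw [e2, map_zero] at h
    rw [map_sum] at h
    have e3 : ∀ k, aeval (fun j => (inr (w j) : TrivSqZeroExt K K))
        (MvPolynomial.C (mulS (φ (0, 1)) (Pi.single k 1) i) * P k) =
        inr (mulS (φ (0, 1)) (Pi.single k 1) i * Dφ w k) := by
      intro k
      rw [map_mul, aeval_C, hfst0 w (P k) (hP0 k), algebraMap_eq_inl', inl_mul_inr]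
      simp [hDφ]
    rw [Finset.sum_congr rfl (fun k _ => e3 k)] at h
    have h5 := congrArg (sndHom K K) h
    rw [map_zero, map_sum] at h5
    have h4 : ∑ k, mulS (φ (0, 1)) (Pi.single k 1) i * Dφ w k = 0 := by
      simpa using h5.symm
    rw [Stmt13.linear_sum]
    have h6 : ∑ k, Dφ w k * mulS (φ (0, 1)) (Pi.single k 1) i =
        ∑ k, mulS (φ (0, 1)) (Pi.single k 1) i * Dφ w k :=
      Finset.sum_congr rfl fun k _ => mul_comm _ _
    rw [h6, h4]
  -- surjectivity of Dφ
  set Qv : Fin 2 → MvPolynomial (Fin m) K := ![Q 0, Q 1] with hQv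
  have hE1 : ∀ i, aeval Qv (P i) = X i := by
    intro i
    apply MvPolynomial.funext
    intro v
    obtain ⟨a, ha⟩ := hsurj v
    rw [Stmt13.eval_aeval]
    have e1 : (fun t => eval v (Qv t)) = ![a.1, a.2] := by
      funext t
      fin_cases t
      · show eval v (Q 0) = a.1
        rw [← ha]; exact ((hQ a).1).symm
      · show eval v (Q 1) = a.2
        rw [← ha]; exact ((hQ a).2).symm
    rw [e1, ← hP a i, ha, eval_X]
  have hsurjD : ∀ u : Fin m → K, ∃ w, Dφ w = u := by
    intro u
    refine ⟨fun t => snd (aeval (fun j => (inr (u j) : TrivSqZeroExt K K)) (Qv t)), ?_⟩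
    funext i
    have h := congrArg (aeval (fun j => (inr (u j) : TrivSqZeroExt K K))) (hE1 i)
    rw [Stmt13.aeval_aeval, aeval_X] at h
    have hq : (fun t => aeval (fun j => (inr (u j) : TrivSqZeroExt K K)) (Qv t)) =
        fun t => (inr (snd (aeval (fun j => (inr (u j) : TrivSqZeroExt K K)) (Qv t)) : K)
          : TrivSqZeroExt K K) := by
      funext t
      apply hfst0 u (Qv t)
      fin_cases t
      · exact hQ0 0
      · exact hQ0 1
    rw [hq] at h
    rw [hfst0 _ (P i) (hP0 i)] at h
    exact inr_injective (R := K) h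
  -- conclusion
  have hLzero : ∀ u, mulS (φ (0, 1)) u = 0 := by
    intro u
    obtain ⟨w, rfl⟩ := hsurjD u
    exact hD w
  have hc0 : φ ((0 : K), (1 : K)) = 0 := by
    have h := honeR (φ (0, 1))
    rw [hLzero oneS] at h
    exact h.symm
  have h2 : ((0 : K), (1 : K)) = (0 : K × K) := hinj (by rw [hc0, hφ0])
  exact one_ne_zero (congrArg Prod.snd h2)

theorem stmt13_pos (K : Type) [Field K] [IsAlgClosed K] (p : ℕ) [Fact p.Prime] [CharP K p]
    (tmul : K × K → K × K → K × K)
    (htmul : tmul = fun a b => (a.1 * b.1, a.1 ^ p * b.2 + b.1 ^ p * a.2)) :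
    ((∀ a b c : K × K, tmul (tmul a b) c = tmul a (tmul b c)) ∧
        (∀ a b : K × K, tmul a b = tmul b a) ∧
        (∀ a : K × K, tmul ((1 : K), (0 : K)) a = a) ∧
        (∀ a b c : K × K, tmul a (b + c) = tmul a b + tmul a c) ∧
        (∃ P : Fin 2 → MvPolynomial (Fin 2 ⊕ Fin 2) K, ∀ a b : K × K,
          tmul a b =
            (MvPolynomial.eval (Sum.elim ![a.1, a.2] ![b.1, b.2]) (P 0),
             MvPolynomial.eval (Sum.elim ![a.1, a.2] ![b.1, b.2]) (P 1)))) := by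
  subst htmul
  refine ⟨?_, ?_, ?_, ?_, ?_⟩
  · intro a b c
    simp only [Prod.mk.injEq]
    constructor
    · ring
    · rw [mul_pow, mul_pow]; ring
  · intro a b
    simp only [Prod.mk.injEq]
    constructor <;> ring
  · intro a
    simp [one_pow]
  · intro a b c
    refine Prod.ext ?_ ?_
    · simp only [Prod.fst_add, Prod.snd_add]; ring
    · simp only [Prod.fst_add, Prod.snd_add, add_pow_char]; ring
  · refine ⟨![X (Sum.inl 0) * X (Sum.inr 0),
      X (Sum.inl 0) ^ p * X (Sum.inr 1) + X (Sum.inr 0) ^ p * X (Sum.inl 1)], ?_⟩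
    intro a b
    simp



/-- Over an algebraically closed field `K` of characteristic `p > 0`, the
set `K × K` with componentwise addition and multiplication
`(x₁,y₁)·(x₂,y₂) = (x₁x₂, x₁^p y₂ + x₂^p y₁)` is a commutative algebraic ring with
identity `(1,0)` (the operations are polynomial and satisfy the commutative unital ring
axioms), but it is not isomorphic as an algebraic ring to any finite-dimensional
`K`-algebra: there is no bijective additive and multiplicative map onto a
finite-dimensional `K`-algebra `K^m` (with `K`-bilinear associative unital
multiplication) which is regular with regular inverse. -/
theorem stmt_13 (K : Type) [Field K] [IsAlgClosed K] (p : ℕ) [Fact p.Prime] [CharP K p] :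
    ∀ tmul : K × K → K × K → K × K,
      (tmul = fun a b => (a.1 * b.1, a.1 ^ p * b.2 + b.1 ^ p * a.2)) →
      (((∀ a b c : K × K, tmul (tmul a b) c = tmul a (tmul b c)) ∧
        (∀ a b : K × K, tmul a b = tmul b a) ∧
        (∀ a : K × K, tmul ((1 : K), (0 : K)) a = a) ∧
        (∀ a b c : K × K, tmul a (b + c) = tmul a b + tmul a c) ∧
        (∃ P : Fin 2 → MvPolynomial (Fin 2 ⊕ Fin 2) K, ∀ a b : K × K,
          tmul a b =
            (MvPolynomial.eval (Sum.elim ![a.1, a.2] ![b.1, b.2]) (P 0),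
             MvPolynomial.eval (Sum.elim ![a.1, a.2] ![b.1, b.2]) (P 1)))) ∧
      ¬ (∃ (m : ℕ) (mulS : (Fin m → K) →ₗ[K] (Fin m → K) →ₗ[K] (Fin m → K))
            (oneS : Fin m → K),
          (∀ x y z : Fin m → K, mulS (mulS x y) z = mulS x (mulS y z)) ∧
          (∀ x : Fin m → K, mulS oneS x = x) ∧ (∀ x : Fin m → K, mulS x oneS = x) ∧
          ∃ φ : K × K → (Fin m → K), Function.Bijective φ ∧
            (∀ a b : K × K, φ (a + b) = φ a + φ b) ∧
            (∀ a b : K × K, φ (tmul a b) = mulS (φ a) (φ b)) ∧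
            φ ((1 : K), (0 : K)) = oneS ∧
            (∃ P : Fin m → MvPolynomial (Fin 2) K,
              ∀ a : K × K, ∀ i, φ a i = MvPolynomial.eval ![a.1, a.2] (P i)) ∧
            (∃ Q : Fin 2 → MvPolynomial (Fin m) K, ∀ a : K × K,
              a.1 = MvPolynomial.eval (φ a) (Q 0) ∧
              a.2 = MvPolynomial.eval (φ a) (Q 1)))) := by
  intro tmul htmul
  exact ⟨stmt13_pos K p tmul htmul, stmt_13' K p tmul htmul⟩
end

section
/- Let $B$ be a finite-dimensional commutative local $K$-algebra over an algebraically closed field $K$, written $B = K \oplus J$ with $J$ the Jacobson radical, and let $d \geq 1$ satisfy $J^d = \{0\}$. Let $G$ be a universal Chevalley-Demazure group scheme with Lie algebra $\mathfrak{g}$, and for an ideal $\mathfrak{b} \subset B$ let $G(B,\mathfrak{b})$ denote the congruence subgroup, the kernel of $G(B) \to G(B/\mathfrak{b})$. Then for each $k = 1, \ldots, d-1$, the quotient $G(B, J^k)/G(B, J^{k+1})$ is isomorphic as an algebraic $K$-group to the direct product of $s_k := \dim_K J^k/J^{k+1}$ copies of the additive group of $\mathfrak{g}$, and the conjugation action of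 $G(K)$ on this quotient is the direct sum of $s_k$ copies of the adjoint representation. -/
noncomputable section

/-- The group of `R`-points of the affine group scheme over `ℤ` cut out inside `GL_n` by
the set of polynomial equations `S`. -/
def GSet (n : ℕ) (S : Set (MvPolynomial (Fin n × Fin n) ℤ)) (R : Type) [CommRing R] :
    Set (Matrix (Fin n) (Fin n) R) :=
  {M | IsUnit M.det ∧
    ∀ p ∈ S, MvPolynomial.aeval (fun ij : Fin n × Fin n => M ij.1 ij.2) p = 0}

/-- The Lie algebra of the group scheme cut out by `S`: matrices `Y` over `K` with
`1 + ε Y` a point over the dual numbers `K[ε]`. -/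
def lieAlg (K : Type) [Field K] (n : ℕ) (S : Set (MvPolynomial (Fin n × Fin n) ℤ)) :
    Set (Matrix (Fin n) (Fin n) K) :=
  {Y | (1 + Y.map (fun a => (TrivSqZeroExt.inr a : DualNumber K)))
      ∈ GSet n S (DualNumber K)}

end


section helpers

variable {n : ℕ} {S : Set (MvPolynomial (Fin n × Fin n) ℤ)}

lemma GSet.map {R R' : Type} [CommRing R] [CommRing R'] (f : R →+* R')
    {M : Matrix (Fin n) (Fin n) R} (hM : M ∈ GSet n S R) :
    f.mapMatrix M ∈ GSet n S R' := by
  constructor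
  · rw [← RingHom.map_det]
    exact hM.1.map f
  · intro p hp
    have := MvPolynomial.comp_aeval_apply (f.toIntAlgHom)
      (f := fun ij : Fin n × Fin n => M ij.1 ij.2) p
    have h2 : (fun ij : Fin n × Fin n => (f.mapMatrix M) ij.1 ij.2)
        = fun ij : Fin n × Fin n => f.toIntAlgHom (M ij.1 ij.2) := rfl
    rw [h2, ← this, hM.2 p hp, map_zero]

lemma GSet.of_equiv {R R' : Type} [CommRing R] [CommRing R'] (e : R ≃+* R')
    {M : Matrix (Fin n) (Fin n) R} (hM : (e : R →+* R').mapMatrix M ∈ GSet n S R') :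
    M ∈ GSet n S R := by
  have := GSet.map (S := S) (e.symm : R' →+* R) hM
  have h2 : (e.symm : R' →+* R).mapMatrix ((e : R →+* R').mapMatrix M) = M := by
    ext a b; simp
  rwa [h2] at this

end helpers

section lift

variable {n : ℕ} {S : Set (MvPolynomial (Fin n × Fin n) ℤ)}

lemma GSet.of_bot {B : Type} [CommRing B] (I : Ideal B) (hI : I = ⊥)
    {N : Matrix (Fin n) (Fin n) (B ⧸ I)} (hN : N ∈ GSet n S (B ⧸ I)) :
    ∃ M ∈ GSet n S B, (Ideal.Quotient.mk I).mapMatrix M = N := by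
  have hinj : Function.Injective (Ideal.Quotient.mk I) := by
    rw [RingHom.injective_iff_ker_eq_bot, Ideal.mk_ker, hI]
  choose m hm using fun a b => Ideal.Quotient.mk_surjective (I := I) (N a b)
  set M : Matrix (Fin n) (Fin n) B := Matrix.of m with hM
  have hmap : (Ideal.Quotient.mk I).mapMatrix M = N := by
    ext a b; exact hm a b
  refine ⟨M, ⟨?_, ?_⟩, hmap⟩
  · obtain ⟨w, hw⟩ := Ideal.Quotient.mk_surjective
      (I := I) (↑hN.1.unit⁻¹ : B ⧸ I)
    have hdet : Ideal.Quotient.mk I M.det = N.det := by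
      rw [← hmap, ← RingHom.map_det]
    refine IsUnit.of_mul_eq_one w (hinj ?_)
    rw [map_mul, map_one, hdet, hw, IsUnit.mul_val_inv]
  · intro p hp
    refine hinj ?_
    rw [map_zero]
    have h3 := MvPolynomial.comp_aeval_apply (Ideal.Quotient.mk I).toIntAlgHom
      (f := fun ij : Fin n × Fin n => M ij.1 ij.2) p
    have h2 : (fun ij : Fin n × Fin n =>
        (Ideal.Quotient.mk I).toIntAlgHom (M ij.1 ij.2))
        = fun ij : Fin n × Fin n => N ij.1 ij.2 := by
      funext ij; exact hm ij.1 ij.2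
    show (Ideal.Quotient.mk I).toIntAlgHom
      ((MvPolynomial.aeval fun ij : Fin n × Fin n => M ij.1 ij.2) p) = 0
    rw [h3, h2, hN.2 p hp]

lemma GSet.lift
    (hsmooth : ∀ (R : Type) [CommRing R] (I : Ideal R), I ^ 2 = ⊥ →
      ∀ N ∈ GSet n S (R ⧸ I), ∃ M ∈ GSet n S R,
        (Ideal.Quotient.mk I).mapMatrix M = N)
    {B : Type} [CommRing B] (J : Ideal B) (d : ℕ) (hJd : J ^ d = ⊥) :
    ∀ (t m : ℕ), 1 ≤ m → d ≤ m + t →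
      ∀ N ∈ GSet n S (B ⧸ J ^ m), ∃ M ∈ GSet n S B,
        (Ideal.Quotient.mk (J ^ m)).mapMatrix M = N := by
  intro t
  induction t with
  | zero =>
    intro m hm hdm N hN
    exact GSet.of_bot _ (le_bot_iff.mp (hJd ▸ Ideal.pow_le_pow_right hdm)) hN
  | succ t ih =>
    intro m hm hdm N hN
    rcases le_or_gt d m with hle | hlt
    · exact GSet.of_bot _ (le_bot_iff.mp (hJd ▸ Ideal.pow_le_pow_right hle)) hN
    · set I₂ : Ideal B := J ^ (2 * m) with hI₂
      set L : Ideal (B ⧸ I₂) := (J ^ m).map (Ideal.Quotient.mk I₂) with hL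
      have hle2 : I₂ ≤ J ^ m := Ideal.pow_le_pow_right (by omega)
      have hL2 : L ^ 2 = ⊥ := by
        rw [hL, ← Ideal.map_pow, ← pow_mul, mul_comm m 2, ← hI₂,
          Ideal.map_quotient_self]
      set e := DoubleQuot.quotQuotEquivQuotOfLE hle2 with he
      have hN' : (e.symm : (B ⧸ J ^ m) →+* _).mapMatrix N ∈ GSet n S ((B ⧸ I₂) ⧸ L) :=
        GSet.map _ hN
      obtain ⟨M₁, hM₁, hM₁eq⟩ := hsmooth (B ⧸ I₂) L hL2 _ hN'
      obtain ⟨M, hM, hMeq⟩ := ih (2 * m) (by omega) (by omega) M₁ hM₁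
      refine ⟨M, hM, ?_⟩
      ext a b
      show Ideal.Quotient.mk (J ^ m) (M a b) = N a b
      have h2 : Ideal.Quotient.mk I₂ (M a b) = M₁ a b := congrFun (congrFun hMeq a) b
      have h1 : Ideal.Quotient.mk L (M₁ a b) = e.symm (N a b) := congrFun (congrFun hM₁eq a) b
      calc Ideal.Quotient.mk (J ^ m) (M a b)
          = e (DoubleQuot.quotQuotMk I₂ (J ^ m) (M a b)) :=
            he ▸ (DoubleQuot.quotQuotEquivQuotOfLE_quotQuotMk (M a b) hle2).symm
        _ = e (Ideal.Quotient.mk L (Ideal.Quotient.mk I₂ (M a b))) := rfl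
        _ = e (e.symm (N a b)) := by rw [h2, h1]
        _ = N a b := e.apply_symm_apply _

end lift

section core

variable {K B : Type} [Field K] [CommRing B] [Algebra K B] {sk : ℕ} {v : Fin sk → B}
  {P Q : Ideal B} {c : B → Fin sk → K}

lemma c_unique_congr
    (hcu : ∀ x ∈ P, ∀ c' : Fin sk → K, x - ∑ i, c' i • v i ∈ Q → c' = c x)
    (hcs : ∀ x ∈ P, x - ∑ i, c x i • v i ∈ Q)
    {x y : B} (hx : x ∈ P) (hy : y ∈ P) (h : x - y ∈ Q) : c x = c y := by
  refine (hcu x hx (c y) ?_).symm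
  have := hcs y hy
  have h2 : x - ∑ i, c y i • v i = (x - y) + (y - ∑ i, c y i • v i) := by ring
  rw [h2]; exact Q.add_mem h this

lemma c_zero_of_mem
    (hcu : ∀ x ∈ P, ∀ c' : Fin sk → K, x - ∑ i, c' i • v i ∈ Q → c' = c x)
    (hQP : Q ≤ P) {x : B} (h : x ∈ Q) : c x = 0 := by
  refine (hcu x (hQP h) 0 ?_).symm
  simp only [Pi.zero_apply, zero_smul, Finset.sum_const_zero, sub_zero]
  exact h

lemma c_add
    (hcu : ∀ x ∈ P, ∀ c' : Fin sk → K, x - ∑ i, c' i • v i ∈ Q → c' = c x)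
    (hcs : ∀ x ∈ P, x - ∑ i, c x i • v i ∈ Q)
    {x y : B} (hx : x ∈ P) (hy : y ∈ P) : c (x + y) = c x + c y := by
  refine (hcu (x + y) (P.add_mem hx hy) (c x + c y) ?_).symm
  have h2 : (x + y) - ∑ i, (c x i + c y i) • v i
      = (x - ∑ i, c x i • v i) + (y - ∑ i, c y i • v i) := by
    simp only [add_smul, Finset.sum_add_distrib]; ring
  simp only [Pi.add_apply]
  rw [h2]
  exact Q.add_mem (hcs x hx) (hcs y hy)

lemma c_alg_smul
    (hcu : ∀ x ∈ P, ∀ c' : Fin sk → K, x - ∑ i, c' i • v i ∈ Q → c' = c x)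
    (hcs : ∀ x ∈ P, x - ∑ i, c x i • v i ∈ Q)
    {x : B} (hx : x ∈ P) (a : K) : c (algebraMap K B a * x) = a • c x := by
  refine (hcu _ (P.mul_mem_left _ hx) (a • c x) ?_).symm
  have h2 : algebraMap K B a * x - ∑ i, (a • c x) i • v i
      = algebraMap K B a * (x - ∑ i, c x i • v i) := by
    rw [mul_sub, Finset.mul_sum]
    congr 1
    refine Finset.sum_congr rfl fun i _ => ?_
    rw [Pi.smul_apply, smul_eq_mul, mul_smul, Algebra.smul_def]
  rw [h2]
  exact Q.mul_mem_left _ (hcs x hx)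

lemma c_finsum {ι : Type} (s : Finset ι)
    (hcu : ∀ x ∈ P, ∀ c' : Fin sk → K, x - ∑ i, c' i • v i ∈ Q → c' = c x)
    (hcs : ∀ x ∈ P, x - ∑ i, c x i • v i ∈ Q)
    (hQP : Q ≤ P)
    (f : ι → B) (hf : ∀ j, f j ∈ P) :
    c (∑ j ∈ s, f j) = ∑ j ∈ s, c (f j) := by
  classical
  induction s using Finset.induction_on with
  | empty => simp [c_zero_of_mem hcu hQP Q.zero_mem]
  | insert j s hj ih =>
    rw [Finset.sum_insert hj, Finset.sum_insert hj,
      c_add hcu hcs (hf _) (Ideal.sum_mem P fun j _ => hf j), ih]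

end core

section subringpsi

variable (K : Type) {B : Type} [Field K] [CommRing B] [Algebra K B]

/-- The subring `K + P` of `B`. -/
def ASub (P : Ideal B) : Subring B where
  carrier := {b | ∃ a : K, b - algebraMap K B a ∈ P}
  one_mem' := ⟨1, by simp⟩
  zero_mem' := ⟨0, by simp⟩
  add_mem' := by
    rintro x y ⟨a, ha⟩ ⟨a', ha'⟩
    exact ⟨a + a', by rw [map_add]; simpa [sub_add_sub_comm] using P.add_mem ha ha'⟩
  neg_mem' := by
    rintro x ⟨a, ha⟩
    refine ⟨-a, ?_⟩
    rw [map_neg, show -x - -algebraMap K B a = -(x - algebraMap K B a) by ring]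
    exact P.neg_mem ha
  mul_mem' := by
    rintro x y ⟨a, ha⟩ ⟨a', ha'⟩
    refine ⟨a * a', ?_⟩
    have h2 : x * y - algebraMap K B (a * a')
        = x * (y - algebraMap K B a') + algebraMap K B a' * (x - algebraMap K B a) := by
      rw [map_mul]; ring
    rw [h2]
    exact P.add_mem (P.mul_mem_left _ ha') (P.mul_mem_left _ ha)

variable (P : Ideal B)

open Classical in
/-- The `K`-component of an element of `K + P`. -/
noncomputable def part0 (b : B) : K :=
  if h : ∃ a : K, b - algebraMap K B a ∈ P then h.choose else 0

lemma part0_spec {b : B} (h : ∃ a : K, b - algebraMap K B a ∈ P) :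
    b - algebraMap K B (part0 K P b) ∈ P := by
  rw [part0, dif_pos h]; exact h.choose_spec

variable {P}

lemma part0_unique (hKinj : ∀ a : K, algebraMap K B a ∈ P → a = 0)
    {b : B} {a : K} (h : b - algebraMap K B a ∈ P) :
    part0 K P b = a := by
  have h0 := part0_spec K P ⟨a, h⟩
  have h1 : algebraMap K B (part0 K P b - a) ∈ P := by
    rw [map_sub]
    have h3 := P.sub_mem h h0
    rwa [show b - algebraMap K B a - (b - algebraMap K B (part0 K P b))
      = algebraMap K B (part0 K P b) - algebraMap K B a by ring] at h3
  exact sub_eq_zero.mp (hKinj _ h1)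

end subringpsi

section psi

variable {K B : Type} [Field K] [CommRing B] [Algebra K B] {sk : ℕ} {v : Fin sk → B}
  {P Q : Ideal B} {c : B → Fin sk → K}

lemma dual_isUnit_of_fst_one (u : DualNumber K) (h : u.fst = 1) : IsUnit u := by
  refine IsUnit.of_mul_eq_one (a := u) (1 - TrivSqZeroExt.inr u.snd) ?_
  have hu : u = 1 + TrivSqZeroExt.inr u.snd := by
    apply TrivSqZeroExt.ext <;>
      simp [h, TrivSqZeroExt.fst_one, TrivSqZeroExt.snd_one]
  have hz : (TrivSqZeroExt.inr u.snd : DualNumber K) * TrivSqZeroExt.inr u.snd = 0 :=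
    TrivSqZeroExt.inr_mul_inr _ _ _
  have key : ∀ x : DualNumber K, x * x = 0 → (1 + x) * (1 - x) = 1 := by
    intro x hx
    have : (1 + x) * (1 - x) = 1 - x * x := by ring
    rw [this, hx, sub_zero]
  rw [show u * (1 - TrivSqZeroExt.inr u.snd)
    = (1 + TrivSqZeroExt.inr u.snd) * (1 - TrivSqZeroExt.inr u.snd) from by rw [← hu]]
  exact key _ hz

variable (c v)

/-- The ring hom `K + P → K[ε]`, `a + x ↦ a + c(x)ᵢ ε`. -/
noncomputable def psiHom (i : Fin sk)
    (hcu : ∀ x ∈ P, ∀ c' : Fin sk → K, x - ∑ j, c' j • v j ∈ Q → c' = c x)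
    (hcs : ∀ x ∈ P, x - ∑ j, c x j • v j ∈ Q)
    (hQP : Q ≤ P)
    (hPQmul : ∀ x y, x ∈ P → y ∈ P → x * y ∈ Q)
    (hKinj : ∀ a : K, algebraMap K B a ∈ P → a = 0) :
    ASub K P →+* DualNumber K where
  toFun b := TrivSqZeroExt.inl (part0 K P b.1)
    + TrivSqZeroExt.inr (c (b.1 - algebraMap K B (part0 K P b.1)) i)
  map_one' := by
    have h1 : part0 K P ((1 : ASub K P) : B) = 1 :=
      part0_unique K hKinj (by simp)
    rw [h1]
    have h2 : ((1 : ASub K P) : B) - algebraMap K B 1 = 0 := by simp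
    rw [h2, c_zero_of_mem hcu hQP Q.zero_mem]
    simp
  map_mul' := by
    rintro x y
    obtain ⟨px, hpx⟩ : ∃ a : K, (x : B) - algebraMap K B a ∈ P := x.2
    obtain ⟨py, hpy⟩ : ∃ a : K, (y : B) - algebraMap K B a ∈ P := y.2
    have hx0 : part0 K P (x : B) = px := part0_unique K hKinj hpx
    have hy0 : part0 K P (y : B) = py := part0_unique K hKinj hpy
    have hcoe : ((x * y : ASub K P) : B) = (x : B) * (y : B) := rfl
    have hdec : (x : B) * (y : B) - algebraMap K B (px * py)
        = algebraMap K B px * ((y : B) - algebraMap K B py)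
          + (algebraMap K B py * ((x : B) - algebraMap K B px)
          + ((x : B) - algebraMap K B px) * ((y : B) - algebraMap K B py)) := by
      rw [map_mul]; ring
    have hmem1 : algebraMap K B px * ((y : B) - algebraMap K B py) ∈ P :=
      P.mul_mem_left _ hpy
    have hmem2 : algebraMap K B py * ((x : B) - algebraMap K B px) ∈ P :=
      P.mul_mem_left _ hpx
    have hmem3 : ((x : B) - algebraMap K B px) * ((y : B) - algebraMap K B py) ∈ Q :=
      hPQmul _ _ hpx hpy
    have hxy0 : part0 K P ((x : B) * (y : B)) = px * py := by
      refine part0_unique K hKinj ?_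
      rw [hdec]
      exact P.add_mem hmem1 (P.add_mem hmem2 (hQP hmem3))
    have hc2 : c ((x : B) * (y : B) - algebraMap K B (px * py))
        = px • c ((y : B) - algebraMap K B py) + (py • c ((x : B) - algebraMap K B px) + 0) := by
      rw [hdec, c_add hcu hcs hmem1 (P.add_mem hmem2 (hQP hmem3)),
        c_add hcu hcs hmem2 (hQP hmem3),
        c_alg_smul hcu hcs hpy px, c_alg_smul hcu hcs hpx py,
        c_zero_of_mem hcu hQP hmem3]
    apply TrivSqZeroExt.ext
    · simp [hcoe, hxy0, hx0, hy0, TrivSqZeroExt.fst_mul]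
    · simp only [hcoe, TrivSqZeroExt.snd_add, TrivSqZeroExt.snd_inl, TrivSqZeroExt.snd_inr,
        zero_add, TrivSqZeroExt.snd_mul, TrivSqZeroExt.fst_add, TrivSqZeroExt.fst_inl,
        TrivSqZeroExt.fst_inr, add_zero, hxy0, hx0, hy0]
      rw [hc2]
      simp only [Pi.add_apply, Pi.smul_apply, Pi.zero_apply, smul_eq_mul, add_zero,
        op_smul_eq_smul]
      try ring
  map_zero' := by
    have h1 : part0 K P ((0 : ASub K P) : B) = 0 :=
      part0_unique K hKinj (by simp)
    rw [h1]
    have h2 : ((0 : ASub K P) : B) - algebraMap K B 0 = 0 := by simp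
    rw [h2, c_zero_of_mem hcu hQP Q.zero_mem]
    simp
  map_add' := by
    rintro x y
    obtain ⟨px, hpx⟩ : ∃ a : K, (x : B) - algebraMap K B a ∈ P := x.2
    obtain ⟨py, hpy⟩ : ∃ a : K, (y : B) - algebraMap K B a ∈ P := y.2
    have hx0 : part0 K P (x : B) = px := part0_unique K hKinj hpx
    have hy0 : part0 K P (y : B) = py := part0_unique K hKinj hpy
    have hcoe : ((x + y : ASub K P) : B) = (x : B) + (y : B) := rfl
    have hdec : (x : B) + (y : B) - algebraMap K B (px + py)
        = ((x : B) - algebraMap K B px) + ((y : B) - algebraMap K B py) := by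
      rw [map_add]; ring
    have hxy0 : part0 K P ((x : B) + (y : B)) = px + py :=
      part0_unique K hKinj (by rw [hdec]; exact P.add_mem hpx hpy)
    have hc2 : c ((x : B) + (y : B) - algebraMap K B (px + py))
        = c ((x : B) - algebraMap K B px) + c ((y : B) - algebraMap K B py) := by
      rw [hdec, c_add hcu hcs hpx hpy]
    apply TrivSqZeroExt.ext
    · simp [hcoe, hxy0, hx0, hy0]
    · simp only [hcoe, TrivSqZeroExt.snd_add, TrivSqZeroExt.snd_inl, TrivSqZeroExt.snd_inr,
        zero_add, hxy0, hx0, hy0]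
      rw [hc2]; simp

end psi

section liealg

variable {K B : Type} [Field K] [CommRing B] [Algebra K B] {sk : ℕ} {v : Fin sk → B}
  {P Q : Ideal B} {c : B → Fin sk → K}

lemma mem_lieAlg_of {n : ℕ} {S : Set (MvPolynomial (Fin n × Fin n) ℤ)}
    (hcu : ∀ x ∈ P, ∀ c' : Fin sk → K, x - ∑ j, c' j • v j ∈ Q → c' = c x)
    (hcs : ∀ x ∈ P, x - ∑ j, c x j • v j ∈ Q)
    (hQP : Q ≤ P)
    (hPQmul : ∀ x y, x ∈ P → y ∈ P → x * y ∈ Q)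
    (hKinj : ∀ a : K, algebraMap K B a ∈ P → a = 0)
    (M : Matrix (Fin n) (Fin n) B) (hM : M ∈ GSet n S B)
    (hMP : ∀ a b, (M - 1) a b ∈ P) (i : Fin sk) :
    Matrix.of (fun a b => c ((M - 1) a b) i) ∈ lieAlg K n S := by
  classical
  set ψ := psiHom (v := v) (c := c) i hcu hcs hQP hPQmul hKinj with hψdef
  have hwit : ∀ a b : Fin n, M a b - algebraMap K B (if a = b then 1 else 0) ∈ P := by
    intro a b
    have h1 : algebraMap K B (if a = b then 1 else 0) = (1 : Matrix (Fin n) (Fin n) B) a b := by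
      rw [Matrix.one_apply, apply_ite (algebraMap K B), map_one, map_zero]
    rw [h1]
    simpa [Matrix.sub_apply] using hMP a b
  set MA : Matrix (Fin n) (Fin n) (ASub K P) :=
    Matrix.of (fun a b => (⟨M a b, ⟨_, hwit a b⟩⟩ : ASub K P)) with hMA
  have hpart : ∀ a b : Fin n, part0 K P (M a b) = if a = b then 1 else 0 :=
    fun a b => part0_unique K hKinj (hwit a b)
  set X : Matrix (Fin n) (Fin n) K := Matrix.of (fun a b => c ((M - 1) a b) i) with hX
  set D : Matrix (Fin n) (Fin n) (DualNumber K) :=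
    1 + X.map (fun a => (TrivSqZeroExt.inr a : DualNumber K)) with hD
  have hψentry : ∀ a b : Fin n, ψ (MA a b) = D a b := by
    intro a b
    have h1 : ψ (MA a b) = TrivSqZeroExt.inl (part0 K P (M a b))
        + TrivSqZeroExt.inr (c (M a b - algebraMap K B (part0 K P (M a b))) i) := rfl
    have h2 : M a b - algebraMap K B (part0 K P (M a b)) = (M - 1) a b := by
      rw [hpart a b, Matrix.sub_apply, Matrix.one_apply, apply_ite (algebraMap K B),
        map_one, map_zero]
    rw [h1, h2, hpart a b]
    show _ = (1 : Matrix (Fin n) (Fin n) (DualNumber K)) a b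
      + (X.map (fun a => (TrivSqZeroExt.inr a : DualNumber K))) a b
    rw [Matrix.one_apply, Matrix.map_apply]
    apply TrivSqZeroExt.ext
    · simp [apply_ite TrivSqZeroExt.fst]
    · simp [apply_ite TrivSqZeroExt.snd, hX, Matrix.sub_apply]
  refine ⟨?_, ?_⟩
  · apply dual_isUnit_of_fst_one
    have hfst := (TrivSqZeroExt.fstHom K K K).toRingHom.map_det D
    have hone : (TrivSqZeroExt.fstHom K K K).toRingHom.mapMatrix D = 1 := by
      ext a b
      show TrivSqZeroExt.fst (D a b) = (1 : Matrix (Fin n) (Fin n) K) a b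
      rw [← hψentry a b]
      have h1 : ψ (MA a b) = TrivSqZeroExt.inl (part0 K P (M a b))
          + TrivSqZeroExt.inr (c (M a b - algebraMap K B (part0 K P (M a b))) i) := rfl
      rw [h1]
      simp [hpart a b, Matrix.one_apply]
    rw [show TrivSqZeroExt.fst D.det = (TrivSqZeroExt.fstHom K K K).toRingHom D.det from rfl,
      hfst, hone, Matrix.det_one]
  · intro p hp
    have hA : MvPolynomial.aeval (fun ij : Fin n × Fin n => MA ij.1 ij.2) p = 0 := by
      apply Subtype.val_injective
      have h3 := MvPolynomial.comp_aeval_apply ((ASub K P).subtype).toIntAlgHom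
        (f := fun ij : Fin n × Fin n => MA ij.1 ij.2) p
      show ((ASub K P).subtype).toIntAlgHom
        ((MvPolynomial.aeval fun ij : Fin n × Fin n => MA ij.1 ij.2) p) = _
      rw [h3]
      have h4 : (fun ij : Fin n × Fin n => ((ASub K P).subtype).toIntAlgHom (MA ij.1 ij.2))
          = fun ij : Fin n × Fin n => M ij.1 ij.2 := rfl
      rw [h4, hM.2 p hp]
      rfl
    have h5 := MvPolynomial.comp_aeval_apply ψ.toIntAlgHom
      (f := fun ij : Fin n × Fin n => MA ij.1 ij.2) p
    rw [hA, map_zero] at h5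
    have h6 : (fun ij : Fin n × Fin n => ψ.toIntAlgHom (MA ij.1 ij.2))
        = fun ij : Fin n × Fin n => D ij.1 ij.2 := by
      funext ij; exact hψentry ij.1 ij.2
    rw [h6] at h5
    exact h5.symm

end liealg

section listprod

lemma mul_list_sum_zero {A : Type} [Ring A] (z : A) :
    ∀ (t : List A), (∀ y ∈ t, z * y = 0) → z * t.sum = 0 := by
  intro t
  induction t with
  | nil => simp
  | cons y t ih =>
    intro h
    rw [List.sum_cons, mul_add, h y (List.mem_cons_self),
      ih (fun y hy => h y (List.mem_cons_of_mem _ hy)), add_zero]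

lemma one_add_list_prod {A : Type} [Ring A] :
    ∀ l : List A, (∀ x ∈ l, ∀ y ∈ l, x * y = 0) →
      (l.map (fun z => 1 + z)).prod = 1 + l.sum := by
  intro l
  induction l with
  | nil => simp
  | cons z t ih =>
    intro h
    simp only [List.map_cons, List.prod_cons, List.sum_cons]
    rw [ih (fun x hx y hy => h x (List.mem_cons_of_mem _ hx) y (List.mem_cons_of_mem _ hy))]
    have hz : z * (1 + t.sum) = z := by
      rw [mul_add, mul_one,
        mul_list_sum_zero z t (fun y hy => h z (List.mem_cons_self) y
          (List.mem_cons_of_mem _ hy)), add_zero]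
    rw [add_mul, one_mul, hz]; abel

lemma gset_list_prod {n : ℕ} {S : Set (MvPolynomial (Fin n × Fin n) ℤ)}
    (hone : ∀ (R : Type) [CommRing R], (1 : Matrix (Fin n) (Fin n) R) ∈ GSet n S R)
    (hmulc : ∀ (R : Type) [CommRing R] (M N : Matrix (Fin n) (Fin n) R),
      M ∈ GSet n S R → N ∈ GSet n S R → M * N ∈ GSet n S R)
    {R : Type} [CommRing R] :
    ∀ l : List (Matrix (Fin n) (Fin n) R), (∀ A ∈ l, A ∈ GSet n S R) →
      l.prod ∈ GSet n S R := by
  intro l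
  induction l with
  | nil => simpa using hone R
  | cons z t ih =>
    intro h
    rw [List.prod_cons]
    exact hmulc R _ _ (h z (List.mem_cons_self))
      (ih (fun A hA => h A (List.mem_cons_of_mem _ hA)))

end listprod


/-- Let `G` be a (universal Chevalley–Demazure) group scheme over `ℤ`,
realized as the subgroup functor of `GL_n` cut out by a set `S` of integral polynomial
equations (the group-functor and smoothness properties of `G` are recorded as the
hypotheses `hone`, `hmulc`, `hinvc`, `hsmooth`), with Lie algebra `𝔤 = lieAlg K n S`.
Let `B = K ⊕ J` be a finite-dimensional commutative local `K`-algebra over an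
algebraically closed field `K` with maximal ideal `J` satisfying `J^d = 0`, and for
`1 ≤ k ≤ d - 1` let `v₁, …, v_{s_k}` be elements of `J^k` whose images form a `K`-basis
of `J^k/J^{k+1}`.  Then the congruence quotient `G(B, J^k)/G(B, J^{k+1})` is isomorphic,
as a group with `G(K)`-action, to the direct sum of `s_k` copies of the additive group
of `𝔤`, the conjugation action of `G(K)` being the direct sum of `s_k` copies of the
adjoint representation: concretely, there is a map `Ψ` on `G(B, J^k)` with values in
`𝔤^{s_k}`, surjective, additive on products, with `Ψ M = Ψ N` iff `M ≡ N mod J^{k+1}`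
(so `Ψ` induces an isomorphism of `G(B,J^k)/G(B,J^{k+1})` onto `𝔤^{s_k}`), satisfying
`M ≡ 1 + ∑ᵢ (Ψ M i) vᵢ mod J^{k+1}` and `Ψ(g M g⁻¹) i = g (Ψ M i) g⁻¹` for
`g ∈ G(K)`. -/
theorem stmt_19 (K : Type) [Field K] [IsAlgClosed K] (n : ℕ)
    (S : Set (MvPolynomial (Fin n × Fin n) ℤ))
    (hone : ∀ (R : Type) [CommRing R], (1 : Matrix (Fin n) (Fin n) R) ∈ GSet n S R)
    (hmulc : ∀ (R : Type) [CommRing R] (M N : Matrix (Fin n) (Fin n) R),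
      M ∈ GSet n S R → N ∈ GSet n S R → M * N ∈ GSet n S R)
    (hinvc : ∀ (R : Type) [CommRing R] (M : (Matrix (Fin n) (Fin n) R)ˣ),
      (M : Matrix (Fin n) (Fin n) R) ∈ GSet n S R →
        ((M⁻¹ : (Matrix (Fin n) (Fin n) R)ˣ) : Matrix (Fin n) (Fin n) R) ∈ GSet n S R)
    (hsmooth : ∀ (R : Type) [CommRing R] (I : Ideal R), I ^ 2 = ⊥ →
      ∀ N ∈ GSet n S (R ⧸ I), ∃ M ∈ GSet n S R,
        (Ideal.Quotient.mk I).mapMatrix M = N)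
    (B : Type) [CommRing B] [IsLocalRing B] [Algebra K B] [FiniteDimensional K B]
    (d : ℕ) (hd : 1 ≤ d) (hJd : IsLocalRing.maximalIdeal B ^ d = ⊥)
    (k : ℕ) (hk1 : 1 ≤ k) (hk2 : k + 1 ≤ d)
    (sk : ℕ) (v : Fin sk → B)
    (hv : ∀ i, v i ∈ IsLocalRing.maximalIdeal B ^ k)
    (hbasis : ∀ x ∈ IsLocalRing.maximalIdeal B ^ k,
      ∃! c : Fin sk → K,
        x - ∑ i, c i • v i ∈ IsLocalRing.maximalIdeal B ^ (k + 1)) :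
    ∃ Ψ : {M : Matrix (Fin n) (Fin n) B // M ∈ GSet n S B ∧
        ∀ a b, (M - 1) a b ∈ IsLocalRing.maximalIdeal B ^ k} →
        (Fin sk → Matrix (Fin n) (Fin n) K),
      (∀ M (i : Fin sk), Ψ M i ∈ lieAlg K n S) ∧
      (∀ M (a b : Fin n),
        M.1 a b - ((1 : Matrix (Fin n) (Fin n) B) a b + ∑ i, Ψ M i a b • v i)
          ∈ IsLocalRing.maximalIdeal B ^ (k + 1)) ∧
      (∀ M N (h : M.1 * N.1 ∈ GSet n S B ∧
          ∀ a b, (M.1 * N.1 - 1) a b ∈ IsLocalRing.maximalIdeal B ^ k),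
        Ψ ⟨M.1 * N.1, h⟩ = Ψ M + Ψ N) ∧
      (∀ M N, Ψ M = Ψ N ↔
        ∀ a b, M.1 a b - N.1 a b ∈ IsLocalRing.maximalIdeal B ^ (k + 1)) ∧
      (∀ Xf : Fin sk → Matrix (Fin n) (Fin n) K,
        (∀ i, Xf i ∈ lieAlg K n S) → ∃ M, Ψ M = Xf) ∧
      (∀ g : (Matrix (Fin n) (Fin n) K)ˣ,
        (g : Matrix (Fin n) (Fin n) K) ∈ GSet n S K →
        ∀ M (h : (algebraMap K B).mapMatrix (g : Matrix (Fin n) (Fin n) K) * M.1 *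
              (algebraMap K B).mapMatrix
                ((g⁻¹ : (Matrix (Fin n) (Fin n) K)ˣ) : Matrix (Fin n) (Fin n) K)
              ∈ GSet n S B ∧
            ∀ a b, ((algebraMap K B).mapMatrix (g : Matrix (Fin n) (Fin n) K) * M.1 *
              (algebraMap K B).mapMatrix
                ((g⁻¹ : (Matrix (Fin n) (Fin n) K)ˣ) : Matrix (Fin n) (Fin n) K) - 1) a b
              ∈ IsLocalRing.maximalIdeal B ^ k),
          Ψ ⟨(algebraMap K B).mapMatrix (g : Matrix (Fin n) (Fin n) K) * M.1 *
              (algebraMap K B).mapMatrix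
                ((g⁻¹ : (Matrix (Fin n) (Fin n) K)ˣ) : Matrix (Fin n) (Fin n) K), h⟩
            = fun i => (g : Matrix (Fin n) (Fin n) K) * Ψ M i *
                ((g⁻¹ : (Matrix (Fin n) (Fin n) K)ˣ) : Matrix (Fin n) (Fin n) K)) := by
  classical
  set J : Ideal B := IsLocalRing.maximalIdeal B with hJ
  set P : Ideal B := J ^ k with hP
  set Q : Ideal B := J ^ (k + 1) with hQ
  have hQP : Q ≤ P := Ideal.pow_le_pow_right (Nat.le_succ k)
  have hPQmul : ∀ x y : B, x ∈ P → y ∈ P → x * y ∈ Q := by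
    intro x y hx hy
    have h1 : x * y ∈ P * P := Ideal.mul_mem_mul hx hy
    have h2 : P * P = J ^ (k + k) := by rw [hP, ← pow_add]
    have h3 : J ^ (k + k) ≤ Q := by rw [hQ]; exact Ideal.pow_le_pow_right (by omega)
    exact h3 (h2 ▸ h1)
  have hKinj : ∀ a : K, algebraMap K B a ∈ P → a = 0 := by
    intro a ha
    by_contra hne
    have hu : IsUnit (algebraMap K B a) := (isUnit_iff_ne_zero.mpr hne).map (algebraMap K B)
    have hsub : P ≤ J := hP ▸ Ideal.pow_le_self (by omega)
    exact (IsLocalRing.maximalIdeal.isMaximal B).ne_top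
      (Ideal.eq_top_of_isUnit_mem _ (hsub ha) hu)
  -- choose the coefficient function
  have hcex : ∀ x : B, ∃ cx : Fin sk → K, x ∈ P →
      (x - ∑ i, cx i • v i ∈ Q) ∧
      (∀ c' : Fin sk → K, x - ∑ i, c' i • v i ∈ Q → c' = cx) := by
    intro x
    by_cases hx : x ∈ P
    · obtain ⟨cx, h1, h2⟩ := hbasis x hx
      exact ⟨cx, fun _ => ⟨h1, fun c' hc' => h2 c' hc'⟩⟩
    · exact ⟨0, fun h => absurd h hx⟩
  choose c hc using hcex
  have hcs : ∀ x ∈ P, x - ∑ i, c x i • v i ∈ Q := fun x hx => (hc x hx).1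
  have hcu : ∀ x ∈ P, ∀ c' : Fin sk → K, x - ∑ i, c' i • v i ∈ Q → c' = c x :=
    fun x hx c' h' => (hc x hx).2 c' h'
  refine ⟨fun M i => Matrix.of (fun a b => c ((M.1 - 1) a b) i), ?_, ?_, ?_, ?_, ?_, ?_⟩
  · -- lie algebra membership
    intro M i
    exact mem_lieAlg_of hcu hcs hQP hPQmul hKinj M.1 M.2.1 M.2.2 i
  · -- congruence M ≡ 1 + ∑ Ψ M i vᵢ
    intro M a b
    have h1 := hcs ((M.1 - 1) a b) (M.2.2 a b)
    have h2 : (M.1 - 1) a b - ∑ i, c ((M.1 - 1) a b) i • v i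
        = M.1 a b - ((1 : Matrix (Fin n) (Fin n) B) a b
          + ∑ i, c ((M.1 - 1) a b) i • v i) := by
      rw [Matrix.sub_apply]; ring
    rw [h2] at h1
    exact h1
  · -- additivity
    intro M N h
    funext i
    ext a b
    show c ((M.1 * N.1 - 1) a b) i = _
    have hmat : M.1 * N.1 - 1 = (M.1 - 1) * (N.1 - 1) + ((M.1 - 1) + (N.1 - 1)) := by
      noncomm_ring
    have hAQ : ((M.1 - 1) * (N.1 - 1)) a b ∈ Q := by
      rw [Matrix.mul_apply]
      exact Ideal.sum_mem _ (fun j _ => hPQmul _ _ (M.2.2 a j) (N.2.2 j b))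
    have hsum : (M.1 - 1) a b + (N.1 - 1) a b ∈ P := P.add_mem (M.2.2 a b) (N.2.2 a b)
    have e0 : (M.1 * N.1 - 1) a b
        = ((M.1 - 1) * (N.1 - 1)) a b + ((M.1 - 1) a b + (N.1 - 1) a b) := by
      rw [hmat, Matrix.add_apply, Matrix.add_apply]
    have e1 : c ((M.1 * N.1 - 1) a b)
        = c (((M.1 - 1) * (N.1 - 1)) a b) + c ((M.1 - 1) a b + (N.1 - 1) a b) := by
      rw [e0]; exact c_add hcu hcs (hQP hAQ) hsum
    have e2 : c (((M.1 - 1) * (N.1 - 1)) a b) = 0 := c_zero_of_mem hcu hQP hAQ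
    have e3 : c ((M.1 - 1) a b + (N.1 - 1) a b)
        = c ((M.1 - 1) a b) + c ((N.1 - 1) a b) :=
      c_add hcu hcs (M.2.2 a b) (N.2.2 a b)
    rw [e1, e2, e3]
    show (0 : Fin sk → K) i + (c ((M.1 - 1) a b) + c ((N.1 - 1) a b)) i = _
    simp only [Pi.zero_apply, Pi.add_apply, zero_add]
    rfl
  · -- congruence criterion
    intro M N
    constructor
    · intro hΨ a b
      have hcxy : c ((M.1 - 1) a b) = c ((N.1 - 1) a b) := by
        funext i
        exact congrFun (congrFun (congrFun hΨ i) a) b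
      have h1 := hcs ((M.1 - 1) a b) (M.2.2 a b)
      have h2 := hcs ((N.1 - 1) a b) (N.2.2 a b)
      rw [hcxy] at h1
      have h3 := Q.sub_mem h1 h2
      have h4 : (M.1 - 1) a b - ∑ i, c ((N.1 - 1) a b) i • v i
          - ((N.1 - 1) a b - ∑ i, c ((N.1 - 1) a b) i • v i)
          = M.1 a b - N.1 a b := by
        rw [Matrix.sub_apply, Matrix.sub_apply]; ring
      rwa [h4] at h3
    · intro hmn
      funext i
      ext a b
      show c ((M.1 - 1) a b) i = c ((N.1 - 1) a b) i
      have h1 : (M.1 - 1) a b - (N.1 - 1) a b ∈ Q := by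
        have h2 : (M.1 - 1) a b - (N.1 - 1) a b = M.1 a b - N.1 a b := by
          rw [Matrix.sub_apply, Matrix.sub_apply]; ring
        rw [h2]; exact hmn a b
      exact congrFun (c_unique_congr hcu hcs (M.2.2 a b) (N.2.2 a b) h1) i
  · -- surjectivity
    intro Xf hXf
    have hvij : ∀ i j : Fin sk,
        Ideal.Quotient.mk Q (v i) * Ideal.Quotient.mk Q (v j) = 0 := by
      intro i j
      rw [← map_mul, Ideal.Quotient.eq_zero_iff_mem]
      exact hPQmul _ _ (hv i) (hv j)
    set φ : Fin sk → (DualNumber K →ₐ[K] (B ⧸ Q)) := fun i => DualNumber.lift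
      ⟨(Algebra.ofId K (B ⧸ Q), Ideal.Quotient.mk Q (v i)),
        hvij i i, fun a => Commute.all _ _⟩ with hφ
    set Z : Fin sk → Matrix (Fin n) (Fin n) (B ⧸ Q) := fun i =>
      Matrix.of (fun a b => algebraMap K (B ⧸ Q) (Xf i a b) * Ideal.Quotient.mk Q (v i))
      with hZ
    have hEeq : ∀ i, (φ i).toRingHom.mapMatrix
        (1 + (Xf i).map (fun a => (TrivSqZeroExt.inr a : DualNumber K))) = 1 + Z i := by
      intro i
      ext a b
      simp only [RingHom.mapMatrix_apply, Matrix.map_apply, Matrix.add_apply,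
        AlgHom.toRingHom_eq_coe, RingHom.coe_coe]
      have hfst : ((1 : Matrix (Fin n) (Fin n) (DualNumber K)) a b
          + TrivSqZeroExt.inr (Xf i a b)).fst = if a = b then 1 else 0 := by
        rw [Matrix.one_apply]
        simp [apply_ite TrivSqZeroExt.fst]
      have hsnd : ((1 : Matrix (Fin n) (Fin n) (DualNumber K)) a b
          + TrivSqZeroExt.inr (Xf i a b)).snd = Xf i a b := by
        rw [Matrix.one_apply]
        simp [apply_ite TrivSqZeroExt.snd]
      rw [hφ, DualNumber.lift_apply_apply]
      rw [hfst, hsnd]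
      rw [hZ]
      simp only [Algebra.ofId_apply, Matrix.one_apply, Matrix.of_apply]
      rw [apply_ite (algebraMap K (B ⧸ Q)), map_one, map_zero]
    have hZmul : ∀ i j, Z i * Z j = 0 := by
      intro i j
      ext a b
      rw [Matrix.mul_apply]
      refine Finset.sum_eq_zero fun p _ => ?_
      show (algebraMap K (B ⧸ Q) (Xf i a p) * Ideal.Quotient.mk Q (v i))
        * (algebraMap K (B ⧸ Q) (Xf j p b) * Ideal.Quotient.mk Q (v j)) = _
      rw [show (algebraMap K (B ⧸ Q) (Xf i a p) * Ideal.Quotient.mk Q (v i))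
          * (algebraMap K (B ⧸ Q) (Xf j p b) * Ideal.Quotient.mk Q (v j))
        = (algebraMap K (B ⧸ Q) (Xf i a p) * algebraMap K (B ⧸ Q) (Xf j p b))
          * (Ideal.Quotient.mk Q (v i) * Ideal.Quotient.mk Q (v j)) from by ring,
        hvij i j, mul_zero]
    have hprodmem : ((List.ofFn Z).map (fun z => 1 + z)).prod ∈ GSet n S (B ⧸ Q) := by
      rw [List.map_ofFn]
      refine gset_list_prod hone hmulc _ ?_
      intro A hA
      rw [List.mem_ofFn] at hA
      obtain ⟨i, hi⟩ := hA
      have : ((fun z => 1 + z) ∘ Z) i = 1 + Z i := rfl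
      rw [← hi, this, ← hEeq i]
      exact GSet.map _ (hXf i)
    have hprodeq : ((List.ofFn Z).map (fun z => 1 + z)).prod = 1 + ∑ i, Z i := by
      rw [one_add_list_prod (List.ofFn Z) ?_, List.sum_ofFn]
      intro x hx y hy
      rw [List.mem_ofFn] at hx hy
      obtain ⟨i, rfl⟩ := hx
      obtain ⟨j, rfl⟩ := hy
      exact hZmul i j
    rw [hprodeq] at hprodmem
    obtain ⟨M0, hM0, hM0eq⟩ := GSet.lift hsmooth J d hJd d (k + 1) (by omega) (by omega)
      (1 + ∑ i, Z i) hprodmem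
    set N₀ : Matrix (Fin n) (Fin n) B :=
      1 + Matrix.of (fun a b => ∑ i, Xf i a b • v i) with hN₀
    have hcong : ∀ a b, M0 a b - N₀ a b ∈ Q := by
      intro a b
      rw [← Ideal.Quotient.eq]
      have h1 : Ideal.Quotient.mk Q (M0 a b) = (1 + ∑ i, Z i) a b :=
        congrFun (congrFun hM0eq a) b
      rw [h1]
      show (1 : Matrix (Fin n) (Fin n) (B ⧸ Q)) a b + (∑ i, Z i) a b = _
      rw [hN₀]
      show _ = Ideal.Quotient.mk Q ((1 : Matrix (Fin n) (Fin n) B) a b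
        + ∑ i, Xf i a b • v i)
      rw [map_add, map_sum]
      congr 1
      · rw [Matrix.one_apply, Matrix.one_apply, apply_ite (Ideal.Quotient.mk Q),
          map_one, map_zero]
      · rw [Matrix.sum_apply]
        refine Finset.sum_congr rfl fun i _ => ?_
        show algebraMap K (B ⧸ Q) (Xf i a b) * Ideal.Quotient.mk Q (v i) = _
        rw [Algebra.smul_def, map_mul, Ideal.Quotient.mk_algebraMap]
    have hmem : ∀ a b : Fin n, (M0 - 1) a b ∈ P := by
      intro a b
      have h1 : (M0 - 1) a b = (M0 a b - N₀ a b) + ∑ i, Xf i a b • v i := by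
        rw [Matrix.sub_apply, hN₀]
        show M0 a b - (1 : Matrix (Fin n) (Fin n) B) a b = _
        have : N₀ a b = (1 : Matrix (Fin n) (Fin n) B) a b + ∑ i, Xf i a b • v i := rfl
        rw [hN₀] at this
        rw [this]; ring
      rw [h1]
      refine P.add_mem (hQP (hcong a b)) (Ideal.sum_mem _ fun i _ => ?_)
      rw [Algebra.smul_def]
      exact P.mul_mem_left _ (hv i)
    refine ⟨⟨M0, hM0, hmem⟩, ?_⟩
    funext i
    ext a b
    show c ((M0 - 1) a b) i = Xf i a b
    have h1 : (M0 - 1) a b - ∑ j, Xf j a b • v j ∈ Q := by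
      have h2 : (M0 - 1) a b - ∑ j, Xf j a b • v j = M0 a b - N₀ a b := by
        rw [Matrix.sub_apply, hN₀]
        show M0 a b - (1 : Matrix (Fin n) (Fin n) B) a b - _
          = M0 a b - ((1 : Matrix (Fin n) (Fin n) B) a b + ∑ j, Xf j a b • v j)
        ring
      rw [h2]; exact hcong a b
    have h3 := hcu ((M0 - 1) a b) (hmem a b) (fun j => Xf j a b) h1
    exact (congrFun h3 i).symm
  · -- conjugation
    intro g hg M h
    funext i
    ext a b
    set gB : Matrix (Fin n) (Fin n) B :=
      (algebraMap K B).mapMatrix (g : Matrix (Fin n) (Fin n) K) with hgBp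
    set gB' : Matrix (Fin n) (Fin n) B :=
      (algebraMap K B).mapMatrix ((g⁻¹ : (Matrix (Fin n) (Fin n) K)ˣ) :
        Matrix (Fin n) (Fin n) K) with hgBq
    have hgg' : gB * gB' = 1 := by
      rw [hgBp, hgBq, ← map_mul, Units.mul_inv, map_one]
    have hmat : gB * M.1 * gB' - 1 = gB * (M.1 - 1) * gB' := by
      rw [mul_sub, sub_mul, mul_one, hgg']
    show c ((gB * M.1 * gB' - 1) a b) i = _
    rw [hmat]
    have hentry : (gB * (M.1 - 1) * gB') a b
        = ∑ j, ∑ p, algebraMap K B ((g : Matrix (Fin n) (Fin n) K) a p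
            * ((g⁻¹ : (Matrix (Fin n) (Fin n) K)ˣ) : Matrix (Fin n) (Fin n) K) j b)
          * (M.1 - 1) p j := by
      rw [Matrix.mul_apply]
      refine Finset.sum_congr rfl fun j _ => ?_
      rw [Matrix.mul_apply, Finset.sum_mul]
      refine Finset.sum_congr rfl fun p _ => ?_
      rw [map_mul]
      show gB a p * (M.1 - 1) p j * gB' j b = _
      rw [hgBp, hgBq]
      show algebraMap K B ((g : Matrix (Fin n) (Fin n) K) a p) * (M.1 - 1) p j
        * algebraMap K B (((g⁻¹ : (Matrix (Fin n) (Fin n) K)ˣ) :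
            Matrix (Fin n) (Fin n) K) j b) = _
      ring
    rw [hentry]
    have hterm : ∀ j p : Fin n,
        algebraMap K B ((g : Matrix (Fin n) (Fin n) K) a p
            * ((g⁻¹ : (Matrix (Fin n) (Fin n) K)ˣ) : Matrix (Fin n) (Fin n) K) j b)
          * (M.1 - 1) p j ∈ P := fun j p => P.mul_mem_left _ (M.2.2 p j)
    rw [c_finsum Finset.univ hcu hcs hQP _
      (fun j => Ideal.sum_mem _ fun p _ => hterm j p)]
    have hinner : ∀ j : Fin n, c (∑ p, algebraMap K B ((g : Matrix (Fin n) (Fin n) K) a p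
            * ((g⁻¹ : (Matrix (Fin n) (Fin n) K)ˣ) : Matrix (Fin n) (Fin n) K) j b)
          * (M.1 - 1) p j)
        = ∑ p, ((g : Matrix (Fin n) (Fin n) K) a p
            * ((g⁻¹ : (Matrix (Fin n) (Fin n) K)ˣ) : Matrix (Fin n) (Fin n) K) j b)
          • c ((M.1 - 1) p j) := by
      intro j
      rw [c_finsum Finset.univ hcu hcs hQP _ (fun p => hterm j p)]
      exact Finset.sum_congr rfl fun p _ => c_alg_smul hcu hcs (M.2.2 p j) _
    show (∑ j, c (∑ p, _)) i = ((g : Matrix (Fin n) (Fin n) K) * Matrix.of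
      (fun a b => c ((M.1 - 1) a b) i) * ((g⁻¹ : (Matrix (Fin n) (Fin n) K)ˣ) :
        Matrix (Fin n) (Fin n) K)) a b
    rw [Finset.sum_apply]
    rw [Matrix.mul_apply]
    refine Finset.sum_congr rfl fun j _ => ?_
    rw [hinner j, Finset.sum_apply, Matrix.mul_apply, Finset.sum_mul]
    refine Finset.sum_congr rfl fun p _ => ?_
    simp only [Pi.smul_apply, smul_eq_mul]
    show _ = (g : Matrix (Fin n) (Fin n) K) a p * c ((M.1 - 1) p j) i
      * ((g⁻¹ : (Matrix (Fin n) (Fin n) K)ˣ) : Matrix (Fin n) (Fin n) K) j b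
    ring
end
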